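/- arXiv:1402.4759 — 9 statements merged into one kernel-verified Lean document; each statement's English description precedes it below -/
import Mathlib

section
/- Let I be a type and A : I → I → ℂ a matrix such that A i i ≠ 0 for all i, the family (log(A i i))_{i∈I} is absolutely summable, and the family of absolute values of the products ∏_{i∈I} A(σ i) i, indexed by the finite permutations σ of I, is summable (for each finite permutation σ this infinite product converges, being ∏_{i∈S} A(σ i) i · ∏_{i∉S} A i i for any finite set S containing the support of σ). Then the net F ↦ det(A_F), indexed by the finite subsets F of I ordered by inclusion, converges to ∑_{σ finite} sgn(σ) · ∏_{i∈I} A(σ i) i, where the sum runs over all finite permutations σ of I. -/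
/-!
Extending a permutation τ of a finite set `F ⊆ I` by the identity turns its product
`∏_{i ∈ I} A (τ i) i` into the corresponding term of the expansion of `det A_F` times the tail
`∏_{i ∉ F} A i i`. Hence the partial sum of the signed family over these extended permutations is
`det A_F · ∏_{i ∉ F} A i i`. As `F` grows, these finite sets exhaust the summable family of all
finite permutations, and the tail, the exponential of a tail of the absolutely convergent series
`∑ log (A i i)`, tends to `1`.
-/

open Filter

/-- The sign of a permutation with finite support: the sign of its restriction
to its (finite) support. -/
noncomputable def finPermSign {I : Type*} (σ : Equiv.Perm I)
    (h : {i | σ i ≠ i}.Finite) : ℤ :=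
  haveI : Fintype {x // σ x ≠ x} := h.fintype
  haveI : DecidableEq {x // σ x ≠ x} := Classical.decEq _
  (Equiv.Perm.sign (σ.subtypePerm (fun x =>
    (not_congr (σ.injective.eq_iff (a := σ x) (b := x)).symm).symm) :
      Equiv.Perm {x // σ x ≠ x}) : ℤ)

open Topology Equiv

section FiniteSign

variable {I : Type*}

theorem norm_finPermSign {R : Type*} [SeminormedRing R] [NormOneClass R] (σ : Perm I)
    (h : {i | σ i ≠ i}.Finite) : ‖(finPermSign σ h : R)‖ = 1 := by
  have norm_units : ∀ u : ℤˣ, ‖((u : ℤ) : R)‖ = 1 := fun u => by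
    rcases Int.units_eq_one_or u with rfl | rfl <;> simp
  exact norm_units _

theorem finPermSign_eq_sign_subtypePerm [DecidableEq I] (σ : Perm I) (h : {i | σ i ≠ i}.Finite)
    {p : I → Prop} [Fintype (Subtype p)] (hp : ∀ x, p (σ x) ↔ p x)
    (hmoved : ∀ x, σ x ≠ x → p x) :
    finPermSign σ h = Perm.sign (σ.subtypePerm hp) := by
  unfold finPermSign
  congr 1
  have : Fintype {x // σ x ≠ x} := h.fintype
  -- `congr!` reconciles the instances chosen inside `finPermSign` with the ones used here.
  refine Eq.trans (by congr!) (Perm.sign_bij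
    (f := (σ.subtypePerm fun _ => σ.injective.ne_iff : Perm {x // σ x ≠ x}))
    (g := σ.subtypePerm hp) (fun x _ => ⟨x.1, hmoved x.1 x.2⟩) (fun _ _ _ => rfl)
    (fun x y _ _ hxy => Subtype.ext (Subtype.mk.inj hxy)) fun y hy => ?_)
  have hy' : σ y ≠ y := fun e => hy (Subtype.ext e)
  exact ⟨⟨y, hy'⟩, fun e => hy' (congrArg Subtype.val e), rfl⟩

theorem finPermSign_ofSubtype [DecidableEq I] {p : I → Prop} [DecidablePred p]
    [Fintype (Subtype p)] (τ : Perm (Subtype p)) (h : {i | Perm.ofSubtype τ i ≠ i}.Finite) :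
    finPermSign (Perm.ofSubtype τ) h = Perm.sign τ := by
  rw [finPermSign_eq_sign_subtypePerm _ h (Perm.ofSubtype_apply_mem_iff_mem τ),
    Perm.subtypePerm_ofSubtype]
  intro x hx
  by_contra hpx
  exact hx (Perm.ofSubtype_apply_of_not_mem τ hpx)

end FiniteSign

theorem Equiv.Perm.apply_iff_of_moved_imp {α : Type*} {σ : Perm α} {p : α → Prop}
    (hmoved : ∀ x, σ x ≠ x → p x) (x : α) : p (σ x) ↔ p x := by
  by_cases hx : σ x = x
  · rw [hx]
  · exact iff_of_true (hmoved _ fun h => hx (σ.injective h)) (hmoved x hx)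

abbrev FinitePerm (I : Type*) : Type _ := {σ : Perm I // {i | σ i ≠ i}.Finite}

namespace FinitePerm

variable {I : Type*} [DecidableEq I]

def ofFinset (F : Finset I) : Perm F ↪ FinitePerm I where
  toFun τ := ⟨Perm.ofSubtype τ, F.finite_toSet.subset fun _ hi =>
    by_contra fun hiF => hi (Perm.ofSubtype_apply_of_not_mem τ hiF)⟩
  inj' _ _ h := Perm.ofSubtype_injective (congrArg Subtype.val h)

@[simp]
theorem coe_ofFinset_apply (F : Finset I) (τ : Perm F) :
    (ofFinset F τ : Perm I) = Perm.ofSubtype τ :=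
  rfl

theorem mem_map_ofFinset {F : Finset I} {σ : FinitePerm I} (hσ : ∀ i, σ.1 i ≠ i → i ∈ F) :
    σ ∈ Finset.univ.map (ofFinset F) :=
  Finset.mem_map.2 ⟨σ.1.subtypePerm (Perm.apply_iff_of_moved_imp hσ), Finset.mem_univ _,
    Subtype.ext (Perm.ofSubtype_subtypePerm _ hσ)⟩

theorem tendsto_map_ofFinset :
    Tendsto (fun F : Finset I => Finset.univ.map (ofFinset F)) atTop atTop := by
  refine tendsto_atTop_atTop.2 fun s => ⟨s.biUnion fun σ => σ.2.toFinset, fun F hF σ hσ => ?_⟩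
  exact mem_map_ofFinset fun i hi => hF (Finset.mem_biUnion.2 ⟨σ, hσ, σ.2.mem_toFinset.2 hi⟩)

end FinitePerm

section InfiniteProducts

variable {I M : Type*}

theorem Complex.tendsto_tprod_compl_atTop_one_of_summable_log {d : I → ℂ} (hd : ∀ i, d i ≠ 0)
    (hlog : Summable fun i => Complex.log (d i)) :
    Tendsto (fun F : Finset I => ∏' i : {x // x ∉ F}, d i) atTop (𝓝 1) := by
  have htail : ∀ F : Finset I,
      Complex.exp (∑' i : {x // x ∉ F}, Complex.log (d i)) = ∏' i : {x // x ∉ F}, d i :=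
    fun F => Complex.cexp_tsum_eq_tprod (fun i => hd i)
      (hlog.comp_injective Subtype.val_injective)
  simpa only [Function.comp_def, htail, Complex.exp_zero] using
    (Complex.continuous_exp.tendsto 0).comp
      (tendsto_tsum_compl_atTop_zero fun i => Complex.log (d i))

theorem tprod_ofSubtype_eq_prod_mul_tprod_compl [CommMonoid M] [TopologicalSpace M]
    [ContinuousMul M] [T2Space M] [DecidableEq I] (A : I → I → M) {F : Finset I}
    (hF : Multipliable fun i : {x // x ∉ F} => A i i) (τ : Perm F) :
    ∏' i, A (Perm.ofSubtype τ i) i = (∏ i, A (τ i) i) * ∏' i : {x // x ∉ F}, A i i := by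
  have htail : HasProd (fun i : ((F : Set I)ᶜ : Set I) => A (Perm.ofSubtype τ i) i)
      (∏' i : {x // x ∉ F}, A i i) :=
    hF.hasProd.congr_fun fun i => by rw [Perm.ofSubtype_apply_of_not_mem τ i.2]
  rw [((F.hasProd fun i => A (Perm.ofSubtype τ i) i).mul_compl htail).tprod_eq,
    ← Finset.prod_coe_sort]
  simp only [Perm.ofSubtype_apply_coe]

theorem sum_map_ofFinset_eq_det_mul [CommRing M] [TopologicalSpace M] [ContinuousMul M]
    [T2Space M] [DecidableEq I] (A : I → I → M) {F : Finset I}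
    (hF : Multipliable fun i : {x // x ∉ F} => A i i) :
    ∑ σ ∈ Finset.univ.map (FinitePerm.ofFinset F), (finPermSign σ.1 σ.2 : M) * ∏' i, A (σ.1 i) i =
      Matrix.det (Matrix.of fun i j : F => A i j) * ∏' i : {x // x ∉ F}, A i i := by
  rw [Finset.sum_map, Matrix.det_apply', Finset.sum_mul]
  refine Finset.sum_congr rfl fun τ _ => ?_
  simp only [FinitePerm.coe_ofFinset_apply, finPermSign_ofSubtype,
    tprod_ofSubtype_eq_prod_mul_tprod_compl A hF, Matrix.of_apply, mul_assoc]

end InfiniteProducts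

theorem Filter.Tendsto.of_mul_right_of_tendsto_one {α K : Type*} [Field K] [TopologicalSpace K]
    [IsTopologicalDivisionRing K] [T1Space K] {l : Filter α} {u v : α → K} {a : K}
    (huv : Tendsto (fun x => u x * v x) l (𝓝 a)) (hv : Tendsto v l (𝓝 1)) :
    Tendsto u l (𝓝 a) := by
  have hquot := huv.mul (hv.inv₀ one_ne_zero)
  rw [inv_one, mul_one] at hquot
  refine hquot.congr' ?_
  filter_upwards [hv.eventually_ne one_ne_zero] with x hx
  rw [mul_assoc, mul_inv_cancel₀ hx, mul_one]

theorem stmt0_general {I : Type*} [DecidableEq I] (A : I → I → ℂ)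
    (hdiag : ∀ i, A i i ≠ 0)
    (hlog : Summable fun i => ‖Complex.log (A i i)‖)
    (hsum : Summable fun σ : {σ : Equiv.Perm I // {i | σ i ≠ i}.Finite} =>
      ‖∏' i, A (σ.1 i) i‖) :
    Tendsto (fun F : Finset I => Matrix.det (Matrix.of fun i j : F => A i.1 j.1))
      atTop (nhds (∑' σ : {σ : Equiv.Perm I // {i | σ i ≠ i}.Finite},
        (finPermSign σ.1 σ.2 : ℂ) * ∏' i, A (σ.1 i) i)) := by
  have hlog' : Summable fun i => Complex.log (A i i) := hlog.of_norm
  have hsigned : Summable fun σ : FinitePerm I => (finPermSign σ.1 σ.2 : ℂ) * ∏' i, A (σ.1 i) i :=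
    Summable.of_norm (by simpa only [norm_mul, norm_finPermSign, one_mul] using hsum)
  refine Tendsto.of_mul_right_of_tendsto_one ?_
    (Complex.tendsto_tprod_compl_atTop_one_of_summable_log hdiag hlog')
  refine (hsigned.hasSum.comp FinitePerm.tendsto_map_ofFinset).congr fun F => ?_
  exact sum_map_ofFinset_eq_det_mul A
    (Complex.multipliable_of_summable_log (hlog'.comp_injective Subtype.val_injective))

/-- computation of the determinant of a determinant class
operator.  If the diagonal entries are nonzero, the family `log (A i i)` is
absolutely summable, and the family of the absolute values of the products
`∏_{i ∈ I} A (σ i) i` over all finite permutations `σ` is summable, then the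
net `F ↦ det A_F` of principal minors over the finite subsets `F ⊆ I`
converges to `∑_{σ finite} sgn σ * ∏_{i ∈ I} A (σ i) i`. -/
theorem stmt0 {I : Type*} [DecidableEq I] (A : I → I → ℂ)
    (hdiag : ∀ i, A i i ≠ 0)
    (hlog : Summable fun i => ‖Complex.log (A i i)‖)
    (hmul : ∀ σ : {σ : Equiv.Perm I // {i | σ i ≠ i}.Finite},
      Multipliable fun i => A (σ.1 i) i)
    (hsum : Summable fun σ : {σ : Equiv.Perm I // {i | σ i ≠ i}.Finite} =>
      ‖∏' i, A (σ.1 i) i‖) :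
    Tendsto (fun F : Finset I => Matrix.det (Matrix.of fun i j : F => A i.1 j.1))
      atTop (nhds (∑' σ : {σ : Equiv.Perm I // {i | σ i ≠ i}.Finite},
        (finPermSign σ.1 σ.2 : ℂ) * ∏' i, A (σ.1 i) i)) :=
  stmt0_general A hdiag hlog hsum
end

section
/- Let I be a type and A : I → I → ℂ a matrix. For M ⊆ I set Ã(M) = {i ∈ I | ∃ j ∈ M, A i j ≠ 0}; call M A-stable if Ã(M) ⊆ M, and call I A-irreducible if the only A-stable subsets of I are ∅ and I. Call a subset C ⊆ I A-connected if the graph on C joining two distinct elements i, j whenever A i j ≠ 0 or A j i ≠ 0 is connected. If I is A-irreducible, then every finite subset F ⊆ I is contained in a finite A-connected subset C ⊆ I; in particular the A-connected finite subsets are cofinal in the directed set of all finite subsets of I. -/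
/-!
The vertices joined to a fixed vertex `b` by a path in the graph `i ~ j :↔ i ≠ j ∧ (A i j ≠ 0 ∨
A j i ≠ 0)` form an `A`-stable set containing `b`, so by irreducibility this graph is connected.
Choosing for each `i ∈ F` a path from `i` to `b` and letting `C` be the union of their vertices,
every vertex of `C` is joined to `b` by a path inside `C`; by symmetry any two are joined.
-/

namespace Relation

variable {α : Type*} {r : α → α → Prop}

def restrict (r : α → α → Prop) (s : Set α) (a b : α) : Prop :=
  a ∈ s ∧ b ∈ s ∧ r a b

theorem restrict_mono {s t : Set α} (hst : s ⊆ t) : restrict r s ≤ restrict r t :=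
  fun _ _ ⟨ha, hb, hab⟩ => ⟨hst ha, hst hb, hab⟩

instance [Std.Symm r] (s : Set α) : Std.Symm (restrict r s) where
  symm _ _ := fun ⟨ha, hb, hab⟩ => ⟨hb, ha, Std.Symm.symm _ _ hab⟩

theorem ReflTransGen.exists_finset_forall_reflTransGen_restrict {a b : α}
    (h : ReflTransGen r a b) :
    ∃ S : Finset α, a ∈ S ∧ ∀ x ∈ S, ReflTransGen (restrict r S) x b := by
  classical
  induction h using ReflTransGen.head_induction_on with
  | refl => exact ⟨{b}, Finset.mem_singleton_self b, fun x hx => by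
      rw [Finset.mem_singleton.mp hx]⟩
  | @head a c hac _ ih =>
    obtain ⟨S, hcS, hS⟩ := ih
    have hsub : (S : Set α) ⊆ ↑(insert a S) := by simp
    have hlift : ∀ x ∈ S, ReflTransGen (restrict r ↑(insert a S)) x b :=
      fun x hx => ReflTransGen.mono (restrict_mono hsub) _ _ (hS x hx)
    refine ⟨insert a S, Finset.mem_insert_self a S, fun x hx => ?_⟩
    rcases Finset.mem_insert.mp hx with rfl | hx
    · exact .head ⟨by simp, by simp [hcS], hac⟩ (hlift c hcS)
    · exact hlift x hx

theorem exists_finite_superset_forall_reflTransGen_restrict [Std.Symm r]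
    (hr : ∀ a b, ReflTransGen r a b) (F : Finset α) :
    ∃ C : Set α, C.Finite ∧ ↑F ⊆ C ∧ ∀ a ∈ C, ∀ b ∈ C, ReflTransGen (restrict r C) a b := by
  rcases F.eq_empty_or_nonempty with rfl | ⟨b, -⟩
  · exact ⟨∅, Set.finite_empty, by simp, by simp⟩
  choose S haS hS using fun a => (hr a b).exists_finset_forall_reflTransGen_restrict
  refine ⟨⋃ a ∈ F, S a, F.finite_toSet.biUnion fun a _ => (S a).finite_toSet,
    fun a ha => Set.mem_biUnion ha (haS a), ?_⟩
  have hb : ∀ x ∈ ⋃ a ∈ F, (S a : Set α),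
      ReflTransGen (restrict r (⋃ a ∈ F, (S a : Set α))) x b := by
    intro x hx
    obtain ⟨a, ha, hxa⟩ := Set.mem_iUnion₂.mp hx
    exact ReflTransGen.mono (restrict_mono (Set.subset_biUnion_of_mem ha)) _ _ (hS a x hxa)
  exact fun x hx y hy => (hb x hx).trans (Std.Symm.symm _ _ (hb y hy))

end Relation

theorem SimpleGraph.reflTransGen_fromRel_adj_of_stable {α : Type*} {R : α → α → Prop}
    (hR : ∀ M : Set α, {i | ∃ j ∈ M, R i j} ⊆ M → M = ∅ ∨ M = Set.univ) (a b : α) :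
    Relation.ReflTransGen (fromRel R).Adj a b := by
  have hstable : {i | ∃ j ∈ {k | Relation.ReflTransGen (fromRel R).Adj k b}, R i j} ⊆
      {k | Relation.ReflTransGen (fromRel R).Adj k b} := by
    rintro i ⟨j, hjb, hij⟩
    by_cases hne : i = j
    · exact hne ▸ hjb
    · exact .head ((fromRel_adj R i j).mpr ⟨hne, .inl hij⟩) hjb
  rcases hR _ hstable with hempty | huniv
  · exact absurd Relation.ReflTransGen.refl (Set.eq_empty_iff_forall_notMem.mp hempty b)
  · exact Set.eq_univ_iff_forall.mp huniv a

/-- If `I` is `A`-irreducible (the only subsets `M ⊆ I` that are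
stable under `Ã(M) = {i | ∃ j ∈ M, A i j ≠ 0}` are `∅` and `I`), then every
finite subset `F ⊆ I` is contained in a finite `A`-connected subset `C ⊆ I`,
where `C` is `A`-connected if any two of its elements are joined by a path
inside `C` along the edges `{i, j}` with `A i j ≠ 0` or `A j i ≠ 0`. -/
theorem stmt2 {I : Type*} (A : I → I → ℂ)
    (hirr : ∀ M : Set I, {i | ∃ j ∈ M, A i j ≠ 0} ⊆ M → M = ∅ ∨ M = Set.univ)
    (F : Finset I) :
    ∃ C : Set I, C.Finite ∧ (↑F : Set I) ⊆ C ∧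
      ∀ i ∈ C, ∀ j ∈ C, Relation.ReflTransGen
        (fun a b => a ∈ C ∧ b ∈ C ∧ a ≠ b ∧ (A a b ≠ 0 ∨ A b a ≠ 0)) i j := by
  have := (SimpleGraph.fromRel fun i j => A i j ≠ 0).symm
  -- `restrict (fromRel _).Adj C` unfolds to the relation of the goal
  exact Relation.exists_finite_superset_forall_reflTransGen_restrict
    (SimpleGraph.reflTransGen_fromRel_adj_of_stable hirr) F
end

section
/- Let q ≥ 2 be an integer (in the motivating example q is a prime power and the matrix below is 1 − uT for the edge operator T of the quotient of the (q+1)-regular Bruhat–Tits tree of GL₂(F_q((1/t))) by Γ = GL₂(F_q[t])). For u ∈ ℂ define B(u) : ℕ → ℕ → ℂ by: B i i = 1 for all i; B (2n+1) (2n) = −(q−1)u and B (2n+2) (2n) = −u for all n ≥ 0; B 0 1 = −qu; B (2n−1) (2n+1) = −qu for all n ≥ 1; and all other entries 0. Then there exists α > 0 such that for every u ∈ ℂ with |u| < α, the net F ↦ det(B(u)_F), indexed by the finite subsets F of ℕ ordered by inclusion, converges to (1 − q²u²)/(1 − qu²). -/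
/-!
Every cycle in the digraph of nonzero off-diagonal entries of `stmt3B q u` uses the entry `(0, 1)`:
without it, listing the odd indices increasingly and then the even ones decreasingly makes the
matrix unitriangular. So if `t` is the least index missing from `F`, the minor over `F` factors
as the leading `t × t` minor times a unitriangular block. The leading minors `Dₙ` satisfy
`D₂ₘ₊₁ = D₂ₘ` and `D₂ₘ₊₂ = D₂ₘ₊₁ - (q - 1)(qu²)ᵐ⁺¹`, the new term coming from the cycle
`0 → 1 → 3 → ⋯ → 2m+1 → 2m → ⋯ → 2 → 0`; hence they are partial sums of a geometric series,
which converges to `(1 - q²u²)/(1 - qu²)` once `|qu²| < 1`.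
-/

open Filter

/-- The matrix `1 - uT` for the edge operator `T` of the quotient of the
`(q+1)`-regular Bruhat–Tits tree of `GL₂(F_q((1/t)))` by `GL₂(F_q[t])`:
even indices `2n` encode the outward ray edges `e_n`, odd indices `2n+1`
their reversals `f_n`. -/
noncomputable def stmt3B (q : ℕ) (u : ℂ) : ℕ → ℕ → ℂ := fun i j =>
  if i = j then 1
  else if i = j + 1 ∧ j % 2 = 0 then -((q : ℂ) - 1) * u
  else if i = j + 2 ∧ j % 2 = 0 then -u
  else if i = 0 ∧ j = 1 then -(q : ℂ) * u
  else if j = i + 2 ∧ i % 2 = 1 then -(q : ℂ) * u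
  else 0

namespace Matrix

variable {R α m : Type*} [CommRing R]

theorem BlockTriangular.det_of_injective [Fintype m] [DecidableEq m]
    [LinearOrder α] {M : Matrix m m R} {b : m → α} (hM : M.BlockTriangular b)
    (hb : Function.Injective b) : M.det = ∏ i, M i i := by
  let : LinearOrder m := LinearOrder.lift' b hb
  exact det_of_isUpperTriangular hM

theorem det_succ_row_of_support {n : ℕ} (A : Matrix (Fin (n + 1)) (Fin (n + 1)) R)
    (i : Fin (n + 1)) (s : Finset (Fin (n + 1))) (hs : ∀ j ∉ s, A i j = 0) :
    A.det =
      ∑ j ∈ s, (-1) ^ (i + j : ℕ) * A i j * (A.submatrix i.succAbove j.succAbove).det := by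
  rw [det_succ_row A i]
  exact (Finset.sum_subset (Finset.subset_univ s) fun j _ hj => by simp [hs j hj]).symm

theorem det_succ_column_of_support {n : ℕ} (A : Matrix (Fin (n + 1)) (Fin (n + 1)) R)
    (j : Fin (n + 1)) (s : Finset (Fin (n + 1))) (hs : ∀ i ∉ s, A i j = 0) :
    A.det =
      ∑ i ∈ s, (-1) ^ (i + j : ℕ) * A i j * (A.submatrix i.succAbove j.succAbove).det := by
  rw [det_succ_column A j]
  exact (Finset.sum_subset (Finset.subset_univ s) fun i _ hi => by simp [hs i hi]).symm

theorem det_submatrix_range_val (A : Matrix ℕ ℕ R) (n : ℕ) :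
    (A.submatrix ((↑) : Finset.range n → ℕ) (↑)).det =
      (A.submatrix (Fin.val : Fin n → ℕ) Fin.val).det := by
  let e : Fin n ≃ Finset.range n :=
    Fin.equivSubtype.trans (Equiv.subtypeEquivRight fun _ => Finset.mem_range.symm)
  rw [← det_submatrix_equiv_self e]
  rfl

variable [DecidableEq α]

theorem det_submatrix_subtype_val (A : Matrix α α R) (F : Finset α) (p : α → Prop)
    [DecidablePred p] :
    (A.submatrix (fun i : {i : F // p i} => (i : α)) fun i : {i : F // p i} => (i : α)).det =
      (A.submatrix ((↑) : F.filter p → α) (↑)).det := by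
  let e : F.filter p ≃ {i : F // p i} :=
    ((Equiv.subtypeEquivRight fun _ => Finset.mem_filter).trans
      (Equiv.subtypeSubtypeEquivSubtypeInter (· ∈ F) p).symm)
  rw [← det_submatrix_equiv_self e]
  rfl

theorem det_submatrix_val_eq_mul_filter (A : Matrix α α R) (F : Finset α) (p : α → Prop)
    [DecidablePred p] (h : ∀ i ∈ F, ∀ j ∈ F, ¬p i → p j → A i j = 0) :
    (A.submatrix ((↑) : F → α) (↑)).det =
      (A.submatrix ((↑) : F.filter p → α) (↑)).det *
        (A.submatrix ((↑) : F.filter (¬p ·) → α) (↑)).det := by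
  rw [twoBlockTriangular_det (A.submatrix ((↑) : F → α) (↑)) (fun i : F => p i)
    fun i hi j hj => h i i.2 j j.2 hi hj]
  exact congrArg₂ (· * ·) (det_submatrix_subtype_val A F p)
    (det_submatrix_subtype_val A F (¬p ·))

theorem det_submatrix_val_eq_mul_filter' (A : Matrix α α R) (F : Finset α) (p : α → Prop)
    [DecidablePred p] (h : ∀ i ∈ F, ∀ j ∈ F, p i → ¬p j → A i j = 0) :
    (A.submatrix ((↑) : F → α) (↑)).det =
      (A.submatrix ((↑) : F.filter p → α) (↑)).det *
        (A.submatrix ((↑) : F.filter (¬p ·) → α) (↑)).det := by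
  rw [twoBlockTriangular_det' (A.submatrix ((↑) : F → α) (↑)) (fun i : F => p i)
    fun i hi j hj => h i i.2 j j.2 hi hj]
  exact congrArg₂ (· * ·) (det_submatrix_subtype_val A F p)
    (det_submatrix_subtype_val A F (¬p ·))

end Matrix

theorem Fin.val_succAbove_eq_ite {n : ℕ} (p : Fin (n + 1)) (i : Fin n) :
    (p.succAbove i : ℕ) = if (i : ℕ) < p then (i : ℕ) else (i : ℕ) + 1 := by
  simp only [Fin.succAbove, Fin.lt_def, Fin.val_castSucc]
  split_ifs <;> rfl

namespace Finset

def mex (F : Finset ℕ) : ℕ := Nat.find (Infinite.exists_notMem_finset F)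

theorem mex_notMem (F : Finset ℕ) : F.mex ∉ F :=
  Nat.find_spec (Infinite.exists_notMem_finset F)

theorem mem_of_lt_mex {F : Finset ℕ} {k : ℕ} (hk : k < F.mex) : k ∈ F :=
  not_not.mp (Nat.find_min (Infinite.exists_notMem_finset F) hk)

theorem le_mex_of_range_subset {F : Finset ℕ} {n : ℕ} (h : range n ⊆ F) : n ≤ F.mex := by
  by_contra hlt
  exact F.mex_notMem (h (mem_range.mpr (not_le.mp hlt)))

theorem tendsto_mex_atTop : Tendsto mex atTop atTop :=
  tendsto_atTop_atTop.mpr fun n => ⟨range n, fun _ hF => le_mex_of_range_subset hF⟩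

end Finset

/-- Odd indices in increasing order, followed by even indices in decreasing order: every
nonzero off-diagonal entry of `stmt3B` other than `(0, 1)` points upwards in this order. -/
def edgeRank (i : ℕ) : ℕ ×ₗ ℤ := toLex ((i + 1) % 2, if i % 2 = 0 then -(i : ℤ) else i)

theorem edgeRank_injective : Function.Injective edgeRank := by
  intro i j h
  simp only [edgeRank, toLex_inj, Prod.mk.injEq] at h
  split_ifs at h <;> omega

/-- With rows `0, …, 2m`, these columns give the minor complementary to the entry `(2m+1, 2m)`
of the leading `(2m+2) × (2m+2)` minor. -/
def skipTwoMul (m : ℕ) (k : Fin (2 * m + 1)) : ℕ := if (k : ℕ) < 2 * m then k else 2 * m + 1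

section

open Matrix Finset

variable {q : ℕ} {u : ℂ} {i j : ℕ}

theorem stmt3B_of_eq (h : i = j) : stmt3B q u i j = 1 := if_pos h

theorem stmt3B_of_eq_add_one (h : i = j + 1) (hj : j % 2 = 0) :
    stmt3B q u i j = -((q : ℂ) - 1) * u := by
  rw [stmt3B, if_neg (by omega), if_pos ⟨h, hj⟩]

theorem stmt3B_of_eq_add_two (h : i = j + 2) (hj : j % 2 = 0) : stmt3B q u i j = -u := by
  rw [stmt3B, if_neg (by omega), if_neg (by omega), if_pos ⟨h, hj⟩]

theorem stmt3B_zero_one : stmt3B q u 0 1 = -(q : ℂ) * u := by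
  rw [stmt3B, if_neg (by omega), if_neg (by omega), if_neg (by omega), if_pos ⟨rfl, rfl⟩]

theorem stmt3B_of_add_two_eq (h : j = i + 2) (hi : i % 2 = 1) :
    stmt3B q u i j = -(q : ℂ) * u := by
  rw [stmt3B, if_neg (by omega), if_neg (by omega), if_neg (by omega), if_neg (by omega),
    if_pos ⟨h, hi⟩]

theorem stmt3B_eq_zero (h₀ : i ≠ j) (h₁ : ¬(i = j + 1 ∧ j % 2 = 0))
    (h₂ : ¬(i = j + 2 ∧ j % 2 = 0)) (h₃ : ¬(i = 0 ∧ j = 1)) (h₄ : ¬(j = i + 2 ∧ i % 2 = 1)) :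
    stmt3B q u i j = 0 := by
  rw [stmt3B, if_neg h₀, if_neg h₁, if_neg h₂, if_neg h₃, if_neg h₄]

theorem det_stmt3B_submatrix_of_zero_notMem {F : Finset ℕ} (hF : 0 ∉ F) :
    ((of (stmt3B q u)).submatrix ((↑) : F → ℕ) (↑)).det = 1 := by
  have htri : ((of (stmt3B q u)).submatrix ((↑) : F → ℕ) (↑)).BlockTriangular
      fun i => edgeRank i := by
    intro i j hij
    have hi : (i : ℕ) ≠ 0 := fun h => hF (h ▸ i.2)
    simp only [edgeRank, Prod.Lex.toLex_lt_toLex] at hij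
    apply stmt3B_eq_zero <;> split_ifs at hij <;> omega
  rw [htri.det_of_injective (edgeRank_injective.comp Subtype.val_injective)]
  exact prod_eq_one fun i _ => stmt3B_of_eq rfl

theorem det_stmt3B_submatrix_eq_det_fin (F : Finset ℕ) :
    ((of (stmt3B q u)).submatrix ((↑) : F → ℕ) (↑)).det =
      ((of (stmt3B q u)).submatrix (Fin.val : Fin F.mex → ℕ) Fin.val).det := by
  set t := F.mex
  have htF : t ∉ F := F.mex_notMem
  have hsplit : ((of (stmt3B q u)).submatrix ((↑) : F → ℕ) (↑)).det =
      ((of (stmt3B q u)).submatrix ((↑) : F.filter (· < t) → ℕ) (↑)).det *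
        ((of (stmt3B q u)).submatrix ((↑) : F.filter (¬· < t) → ℕ) (↑)).det := by
    rcases Nat.even_or_odd t with ⟨r, hr⟩ | ⟨r, hr⟩
    · refine det_submatrix_val_eq_mul_filter _ F (· < t) fun i hi j _ hit hjt => ?_
      have : i ≠ t := fun h => htF (h ▸ hi)
      exact stmt3B_eq_zero (by omega) (by omega) (by omega) (by omega) (by omega)
    · refine det_submatrix_val_eq_mul_filter' _ F (· < t) fun i _ j hj hit hjt => ?_
      have : j ≠ t := fun h => htF (h ▸ hj)
      exact stmt3B_eq_zero (by omega) (by omega) (by omega) (by omega) (by omega)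
  have hlow : F.filter (· < t) = range t := by
    ext k
    simp only [mem_filter, mem_range, and_iff_right_iff_imp]
    exact mem_of_lt_mex
  have hhigh : 0 ∉ F.filter (¬· < t) := by
    simp only [mem_filter, not_lt, nonpos_iff_eq_zero, not_and]
    exact fun h0 ht => htF (ht ▸ h0)
  rw [hsplit, hlow, det_stmt3B_submatrix_of_zero_notMem hhigh, mul_one, det_submatrix_range_val]

theorem det_stmt3B_submatrix_skipTwoMul (m : ℕ) :
    ((of (stmt3B q u)).submatrix Fin.val (skipTwoMul m)).det =
      -(q : ℂ) * u * ((q : ℂ) * u ^ 2) ^ m := by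
  induction m with
  | zero => simpa [det_fin_one, skipTwoMul] using stmt3B_zero_one
  | succ m ih =>
    set M := (of (stmt3B q u)).submatrix Fin.val (skipTwoMul (m + 1))
    let c : Fin (2 * m + 3) := ⟨2 * m, by omega⟩
    set G : Matrix (Fin (2 * m + 2)) (Fin (2 * m + 2)) ℂ :=
      M.submatrix (Fin.last _).succAbove c.succAbove
    have hrow : M.det = -u * G.det := by
      rw [det_succ_row_of_support M (Fin.last _) {c}, sum_singleton,
        Even.neg_one_pow ⟨2 * m + 1, by simp [c]; omega⟩, one_mul,
        show M (Fin.last _) c = -u from stmt3B_of_eq_add_two (by simp [c, skipTwoMul]; omega)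
          (by simp [c, skipTwoMul])]
      · rfl
      · intro k hk
        simp only [c, mem_singleton, Fin.ext_iff] at hk
        have := k.isLt
        simp only [M, skipTwoMul, submatrix_apply, of_apply, Fin.val_last]
        split_ifs <;> exact stmt3B_eq_zero (by omega) (by omega) (by omega) (by omega) (by omega)
    have hcol :
        G.det = -(q : ℂ) * u * ((of (stmt3B q u)).submatrix Fin.val (skipTwoMul m)).det := by
      rw [det_succ_column_of_support (n := 2 * m + 1) G (Fin.last _) {Fin.last _},
        sum_singleton, (Even.add_self _).neg_one_pow, one_mul]
      · congr 1
        · simp only [G, M, c, skipTwoMul, submatrix_apply, of_apply, Fin.succAbove_last,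
            Fin.val_castSucc, Fin.val_succAbove_eq_ite, Fin.val_last]
          exact stmt3B_of_add_two_eq (by split_ifs <;> omega) (by omega)
        · congr 1
          ext k l
          have := l.isLt
          simp only [G, M, c, skipTwoMul, submatrix_apply, of_apply, Fin.succAbove_last,
            Fin.val_castSucc, Fin.val_succAbove_eq_ite]
          congr 1
          split_ifs <;> omega
      · intro k hk
        simp only [mem_singleton, Fin.ext_iff, Fin.val_last] at hk
        have := k.isLt
        simp only [G, M, c, skipTwoMul, submatrix_apply, of_apply, Fin.succAbove_last,
          Fin.val_castSucc, Fin.val_succAbove_eq_ite, Fin.val_last]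
        split_ifs <;> exact stmt3B_eq_zero (by omega) (by omega) (by omega) (by omega) (by omega)
    rw [hrow, hcol, ih]
    ring

theorem det_stmt3B_fin_two_mul_add_one (m : ℕ) :
    ((of (stmt3B q u)).submatrix (Fin.val : Fin (2 * m + 1) → ℕ) Fin.val).det =
      ((of (stmt3B q u)).submatrix (Fin.val : Fin (2 * m) → ℕ) Fin.val).det := by
  rw [det_succ_column_of_support _ (Fin.last _) {Fin.last _}, sum_singleton,
    Fin.succAbove_last]
  · rw [Even.neg_one_pow ⟨_, rfl⟩, one_mul, submatrix_apply, of_apply, stmt3B_of_eq rfl, one_mul]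
    rfl
  · intro k hk
    simp only [mem_singleton, Fin.ext_iff, Fin.val_last] at hk
    have := k.isLt
    simp only [submatrix_apply, of_apply, Fin.val_last]
    exact stmt3B_eq_zero (by omega) (by omega) (by omega) (by omega) (by omega)

theorem det_stmt3B_fin_two_mul_add_two (m : ℕ) :
    ((of (stmt3B q u)).submatrix (Fin.val : Fin (2 * m + 2) → ℕ) Fin.val).det =
      ((of (stmt3B q u)).submatrix (Fin.val : Fin (2 * m + 1) → ℕ) Fin.val).det -
        ((q : ℂ) - 1) * ((q : ℂ) * u ^ 2) ^ (m + 1) := by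
  set M := (of (stmt3B q u)).submatrix (Fin.val : Fin (2 * m + 2) → ℕ) Fin.val
  let c : Fin (2 * m + 2) := ⟨2 * m, by omega⟩
  have hc : c ≠ Fin.last _ := by simp [c, Fin.ext_iff]
  have hskip : M.submatrix (Fin.last _).succAbove c.succAbove =
      (of (stmt3B q u)).submatrix Fin.val (skipTwoMul m) := by
    ext k l
    have := l.isLt
    simp only [M, c, skipTwoMul, submatrix_apply, of_apply, Fin.succAbove_last, Fin.val_castSucc,
      Fin.val_succAbove_eq_ite]
    congr 1
    split_ifs <;> omega
  rw [det_succ_row_of_support M (Fin.last _) {c, Fin.last _}, sum_pair hc, hskip,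
    det_stmt3B_submatrix_skipTwoMul, Fin.succAbove_last]
  · rw [Odd.neg_one_pow ⟨2 * m, by simp [c]; omega⟩, (Even.add_self _).neg_one_pow]
    simp only [M, c, submatrix_apply, of_apply, Fin.val_last]
    rw [stmt3B_of_eq_add_one rfl (by omega), stmt3B_of_eq rfl]
    change _ + 1 * 1 *
      ((of (stmt3B q u)).submatrix (Fin.val : Fin (2 * m + 1) → ℕ) Fin.val).det = _
    ring
  · intro k hk
    simp only [mem_insert, mem_singleton, Fin.ext_iff, Fin.val_last, c, not_or] at hk
    have := k.isLt
    simp only [M, submatrix_apply, of_apply, Fin.val_last]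
    exact stmt3B_eq_zero (by omega) (by omega) (by omega) (by omega) (by omega)

theorem det_stmt3B_fin (n : ℕ) :
    ((of (stmt3B q u)).submatrix (Fin.val : Fin n → ℕ) Fin.val).det =
      1 - ((q : ℂ) - 1) * ∑ k ∈ range (n / 2), ((q : ℂ) * u ^ 2) ^ (k + 1) := by
  have heven (m : ℕ) : ((of (stmt3B q u)).submatrix (Fin.val : Fin (2 * m) → ℕ) Fin.val).det =
      1 - ((q : ℂ) - 1) * ∑ k ∈ range m, ((q : ℂ) * u ^ 2) ^ (k + 1) := by
    induction m with
    | zero => simp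
    | succ m ih =>
      rw [sum_range_succ, ← ((by ring) : 2 * m + 2 = 2 * (m + 1)),
        det_stmt3B_fin_two_mul_add_two, det_stmt3B_fin_two_mul_add_one, ih]
      ring
  obtain ⟨m, rfl | rfl⟩ := Nat.even_or_odd' n
  · rw [heven, Nat.mul_div_cancel_left m two_pos]
  · rw [det_stmt3B_fin_two_mul_add_one, heven, Nat.mul_add_div two_pos,
      Nat.div_eq_of_lt one_lt_two, add_zero]

theorem norm_natCast_mul_sq_lt_one (hu : ‖u‖ < 1 / (q + 1)) :
    ‖(q : ℂ) * u ^ 2‖ < 1 := by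
  rw [lt_div_iff₀ (by positivity)] at hu
  rw [norm_mul, norm_pow, Complex.norm_natCast]
  nlinarith [norm_nonneg u, (Nat.cast_nonneg q : (0 : ℝ) ≤ q)]

theorem tendsto_one_sub_mul_sum_pow (hr : ‖(q : ℂ) * u ^ 2‖ < 1) :
    Tendsto (fun n => 1 - ((q : ℂ) - 1) * ∑ k ∈ range n, ((q : ℂ) * u ^ 2) ^ (k + 1)) atTop
      (nhds ((1 - (q : ℂ) ^ 2 * u ^ 2) / (1 - (q : ℂ) * u ^ 2))) := by
  have hne : 1 - (q : ℂ) * u ^ 2 ≠ 0 := fun h => by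
    rw [← sub_eq_zero.mp h, norm_one] at hr
    exact hr.false
  have hsum := ((hasSum_geometric_of_norm_lt_one hr).mul_left ((q : ℂ) * u ^ 2)).tendsto_sum_nat
  convert (hsum.const_mul ((q : ℂ) - 1)).const_sub 1 using 2
  · simp only [pow_succ', mul_sum]
  · field_simp
    ring

end

theorem stmt3_general (q : ℕ) :
    ∃ α : ℝ, 0 < α ∧ ∀ u : ℂ, ‖u‖ < α →
      Tendsto
        (fun F : Finset ℕ => Matrix.det (Matrix.of fun i j : F => stmt3B q u i.1 j.1))
        atTop (nhds ((1 - (q : ℂ) ^ 2 * u ^ 2) / (1 - (q : ℂ) * u ^ 2))) := by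
  refine ⟨1 / (q + 1), by positivity, fun u hu => ?_⟩
  have hdet : (fun F : Finset ℕ => Matrix.det (Matrix.of fun i j : F => stmt3B q u i.1 j.1)) =
      (fun n => 1 - ((q : ℂ) - 1) * ∑ k ∈ Finset.range n, ((q : ℂ) * u ^ 2) ^ (k + 1)) ∘
        fun F => F.mex / 2 :=
    funext fun F => (det_stmt3B_submatrix_eq_det_fin F).trans (det_stmt3B_fin _)
  rw [hdet]
  exact (tendsto_one_sub_mul_sum_pow (norm_natCast_mul_sq_lt_one hu)).comp
    ((Nat.tendsto_div_const_atTop two_ne_zero).comp Finset.tendsto_mex_atTop)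

/-- there is `α > 0` such that for `|u| < α` the net of
determinants of the finite principal minors of `stmt3B q u` converges to
`(1 - q²u²)/(1 - qu²)`. -/
theorem stmt3 (q : ℕ) (hq : 2 ≤ q) :
    ∃ α : ℝ, 0 < α ∧ ∀ u : ℂ, ‖u‖ < α →
      Tendsto
        (fun F : Finset ℕ => Matrix.det (Matrix.of fun i j : F => stmt3B q u i.1 j.1))
        atTop (nhds ((1 - (q : ℂ) ^ 2 * u ^ 2) / (1 - (q : ℂ) * u ^ 2))) :=
  stmt3_general q
end

section
/- Let q ≥ 2 be an integer. For u ∈ ℂ define M(u) : ℕ → ℕ → ℂ by: M n n = 1 + qu² for all n; M 0 1 = −(q+1)u; M n (n+1) = −u for all n ≥ 1; M n (n−1) = −qu for all n ≥ 1; and all other entries 0 (this is 1 − uA + u²Q for the Nagao ray, where A is the pushed-down adjacency operator and Q = (q+1−1)·Id the valency-minus-one operator of the (q+1)-regular tree). Then: (a) there exists α > 0 such that for every u ∈ ℂ with |u| < α, the determinants of the principal minors on the initial segments {0, 1, …, N−1} converge, as N → ∞, to (1 − q²u²)/(1 − qu²); (b) there exists α > 0 such that for every u ∈ ℂ with 0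 < |u| < α, the net F ↦ det(M(u)_F) indexed by ALL finite subsets F of ℕ ordered by inclusion does NOT converge. Hence M(u) is of connected determinant class but not of determinant class. -/
/-!
The minors on initial segments are leading minors of a tridiagonal matrix, so their determinants
`D N` obey the three-term recurrence; for this matrix it collapses to the affine recurrence
`D (N + 1) = q u² D N + (1 - q² u²)` for `N ≥ 1`, whence `D N → (1 - q²u²)/(1 - qu²)` once
`‖q u²‖ < 1`. For an arbitrary finite `F`, the point `max F + 2` is isolated from `F`, so adjoining
it multiplies the determinant by the diagonal entry `1 + q u²`. A limit `L` of the net over all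
finite sets would therefore satisfy `(1 + q u²) L = L`, i.e. `L = 0`, while `L` must also be the
nonzero limit along initial segments.
-/

open Filter

/-- The matrix `1 - uA + u²Q` for the Nagao ray in the `(q+1)`-regular tree,
where `A` is the pushed-down adjacency operator and `Q = q·Id`. -/
noncomputable def stmt4M (q : ℕ) (u : ℂ) : ℕ → ℕ → ℂ := fun n m =>
  if n = m then 1 + (q : ℂ) * u ^ 2
  else if n = 0 ∧ m = 1 then -((q : ℂ) + 1) * u
  else if m = n + 1 ∧ 1 ≤ n then -u
  else if n = m + 1 then -(q : ℂ) * u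
  else 0

open Topology

namespace Matrix

variable {α R : Type*}

def IsTridiagonal [Zero R] (M : ℕ → ℕ → R) : Prop :=
  ∀ i j, i + 2 ≤ j ∨ j + 2 ≤ i → M i j = 0

def leadingMinor (M : ℕ → ℕ → R) (n : ℕ) : Matrix (Fin n) (Fin n) R := of fun i j => M i j

@[simp]
theorem leadingMinor_apply (M : ℕ → ℕ → R) (n : ℕ) (i j : Fin n) :
    leadingMinor M n i j = M i j := rfl

@[simp]
theorem leadingMinor_submatrix_castSucc (M : ℕ → ℕ → R) (n : ℕ) :
    (leadingMinor M (n + 1)).submatrix Fin.castSucc Fin.castSucc = leadingMinor M n := rfl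

variable [CommRing R]

def minorDet [DecidableEq α] (M : α → α → R) (F : Finset α) : R := (of fun i j : F => M i j).det

theorem minorDet_range (M : ℕ → ℕ → R) (n : ℕ) :
    minorDet M (Finset.range n) = (leadingMinor M n).det :=
  let e : Finset.range n ≃ Fin n :=
    ⟨fun i => ⟨i, Finset.mem_range.1 i.2⟩, fun k => ⟨k, Finset.mem_range.2 k.2⟩,
      fun _ => rfl, fun _ => rfl⟩
  det_submatrix_equiv_self e (leadingMinor M n)

theorem minorDet_insert_of_isolated [DecidableEq α] (M : α → α → R) {F : Finset α} {m : α}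
    (hm : m ∉ F) (hrow : ∀ j ∈ F, M m j = 0) (hcol : ∀ i ∈ F, M i m = 0) :
    minorDet M (insert m F) = M m m * minorDet M F := by
  let e := (Finset.subtypeInsertEquivOption hm).trans (Equiv.optionEquivSumPUnit.{0} F)
  have hblocks : (of fun i j : (insert m F : Finset α) => M i j).submatrix e.symm e.symm
      = fromBlocks (of fun i j : F => M i j) 0 0 (of fun _ _ : PUnit => M m m) := by
    ext (i | _) (j | _)
    · rfl
    · exact hcol i i.2
    · exact hrow j j.2
    · rfl
  rw [minorDet, ← det_submatrix_equiv_self e.symm, hblocks, det_fromBlocks_zero₁₂,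
    det_unique (of fun _ _ : PUnit => M m m), minorDet, mul_comm]
  rfl

namespace IsTridiagonal

variable {M : ℕ → ℕ → R} (hM : IsTridiagonal M)
include hM

theorem det_leadingMinor_submatrix_castSucc_succAbove (n : ℕ) :
    ((leadingMinor M (n + 2)).submatrix Fin.castSucc (Fin.last n).castSucc.succAbove).det =
      M n (n + 1) * (leadingMinor M n).det := by
  rw [det_succ_column _ (Fin.last n), Fin.sum_univ_castSucc]
  have hcol : ∀ i : Fin n, M i (n + 1) = 0 := fun i => hM _ _ (.inl (by omega))
  have hminor : ((leadingMinor M (n + 2)).submatrix Fin.castSucc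
      (Fin.last n).castSucc.succAbove).submatrix (Fin.last n).succAbove (Fin.last n).succAbove =
      leadingMinor M n := by
    ext i j
    simp [Fin.succAbove_castSucc_of_lt _ _ (Fin.castSucc_lt_last j)]
  rw [hminor]
  simp [hcol]

theorem det_leadingMinor_add_two (n : ℕ) :
    (leadingMinor M (n + 2)).det = M (n + 1) (n + 1) * (leadingMinor M (n + 1)).det
      - M n (n + 1) * M (n + 1) n * (leadingMinor M n).det := by
  rw [det_succ_row _ (Fin.last (n + 1)), Fin.sum_univ_castSucc, Fin.sum_univ_castSucc]
  have hrow : ∀ j : Fin n, M (n + 1) j = 0 := fun j => hM _ _ (.inr (by omega))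
  simp only [Fin.val_last, Fin.val_castSucc, pow_add, pow_one, mul_neg, mul_one, neg_mul,
    leadingMinor_apply, hrow, mul_zero, Fin.succAbove_last, zero_mul, Finset.sum_const_zero,
    hM.det_leadingMinor_submatrix_castSucc_succAbove, zero_add, neg_neg,
    leadingMinor_submatrix_castSucc]
  rw [← mul_pow, neg_one_mul, neg_neg, one_pow]
  ring

theorem minorDet_insert_sup_add_two (F : Finset ℕ) :
    minorDet M (insert (F.sup id + 2) F) = M (F.sup id + 2) (F.sup id + 2) * minorDet M F := by
  have hfar : ∀ j ∈ F, j + 2 ≤ F.sup id + 2 := fun j hj => by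
    simpa using Finset.le_sup (f := id) hj
  exact minorDet_insert_of_isolated M (fun h => absurd (hfar _ h) (by omega))
    (fun j hj => hM _ _ (.inr (hfar j hj))) (fun i hi => hM _ _ (.inl (hfar i hi)))

theorem mul_eq_of_tendsto_minorDet {d L : R} [TopologicalSpace R] [T2Space R]
    [ContinuousMul R] (hd : ∀ n, M n n = d) (hL : Tendsto (minorDet M) atTop (𝓝 L)) :
    d * L = L := by
  have hgrow : Tendsto (fun F : Finset ℕ => insert (F.sup id + 2) F) atTop atTop :=
    tendsto_atTop_mono (fun F => Finset.subset_insert _ F) tendsto_id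
  refine tendsto_nhds_unique ?_ (hL.comp hgrow)
  simpa [Function.comp_def, hM.minorDet_insert_sup_add_two, hd] using hL.const_mul d

end IsTridiagonal

end Matrix

theorem tendsto_of_eq_mul_add {𝕜 : Type*} [NormedField 𝕜] {x : ℕ → 𝕜} {t b : 𝕜} (ht : ‖t‖ < 1)
    (hx : ∀ n, x (n + 1) = t * x n + b) : Tendsto x atTop (𝓝 (b / (1 - t))) := by
  have ht1 : 1 - t ≠ 0 := sub_ne_zero.2 fun h => by simp [← h] at ht
  set c := b / (1 - t)
  have hgeom : ∀ n, x n = t ^ n * (x 0 - c) + c := by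
    intro n
    induction n with
    | zero => simp
    | succ n ih =>
      have hc : (1 - t) * c = b := mul_div_cancel₀ b ht1
      rw [hx, ih]
      linear_combination -hc
  rw [funext hgeom]
  simpa using ((tendsto_pow_atTop_nhds_zero_of_norm_lt_one ht).mul_const (x 0 - c)).add_const c

theorem stmt4M_self (q : ℕ) (u : ℂ) (n : ℕ) : stmt4M q u n n = 1 + q * u ^ 2 := by
  simp [stmt4M]

theorem stmt4M_succ_self (q : ℕ) (u : ℂ) (n : ℕ) : stmt4M q u (n + 1) n = -q * u := by
  rw [stmt4M, if_neg (by omega), if_neg (by omega), if_neg (by omega), if_pos rfl]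

theorem stmt4M_zero_one (q : ℕ) (u : ℂ) : stmt4M q u 0 1 = -(q + 1) * u := by
  simp [stmt4M]

theorem stmt4M_succ_succ_add_one (q : ℕ) (u : ℂ) (n : ℕ) : stmt4M q u (n + 1) (n + 2) = -u := by
  simp [stmt4M]

theorem stmt4M_isTridiagonal (q : ℕ) (u : ℂ) : Matrix.IsTridiagonal (stmt4M q u) := by
  intro i j hij
  unfold stmt4M
  split_ifs <;> first | rfl | omega

open Matrix in
theorem det_leadingMinor_stmt4M_add_two (q : ℕ) (u : ℂ) (n : ℕ) :
    (leadingMinor (stmt4M q u) (n + 2)).det =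
      q * u ^ 2 * (leadingMinor (stmt4M q u) (n + 1)).det + (1 - q ^ 2 * u ^ 2) := by
  have hM := stmt4M_isTridiagonal q u
  induction n with
  | zero =>
    rw [hM.det_leadingMinor_add_two, det_fin_one, det_isEmpty]
    simp only [leadingMinor_apply, zero_add, stmt4M_self, stmt4M_zero_one, stmt4M_succ_self]
    ring
  | succ n ih =>
    rw [hM.det_leadingMinor_add_two, stmt4M_self, stmt4M_succ_succ_add_one, stmt4M_succ_self, ih]
    ring

theorem tendsto_det_leadingMinor_stmt4M (q : ℕ) {u : ℂ} (hu : ‖(q : ℂ) * u ^ 2‖ < 1) :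
    Tendsto (fun N => (Matrix.leadingMinor (stmt4M q u) N).det) atTop
      (𝓝 ((1 - (q : ℂ) ^ 2 * u ^ 2) / (1 - (q : ℂ) * u ^ 2))) :=
  (tendsto_add_atTop_iff_nat 1).1 <|
    tendsto_of_eq_mul_add hu fun n => det_leadingMinor_stmt4M_add_two q u n

theorem norm_mul_sq_lt_one {q : ℕ} (hq : 1 ≤ q) {u : ℂ} (hu : ‖u‖ < 1 / q) :
    ‖(q : ℂ) * u ^ 2‖ < 1 ∧ ‖(q : ℂ) ^ 2 * u ^ 2‖ < 1 := by
  have hq' : (1 : ℝ) ≤ q := by exact_mod_cast hq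
  have hqu : q * ‖u‖ < 1 := by rwa [lt_div_iff₀ (by positivity), mul_comm] at hu
  have hu1 : ‖u‖ ≤ q * ‖u‖ := le_mul_of_one_le_left (norm_nonneg u) hq'
  simp only [norm_mul, norm_pow, Complex.norm_natCast]
  constructor <;> nlinarith [norm_nonneg u]

/-- (a) for `|u|` small the determinants of the principal minors
of `stmt4M q u` on the initial segments `{0, …, N-1}` converge to
`(1 - q²u²)/(1 - qu²)`; (b) for `0 < |u|` small the net of determinants of the
principal minors over ALL finite subsets of `ℕ` does not converge.  Hence
`stmt4M q u` is of connected determinant class, but not of determinant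
class. -/
theorem stmt4 (q : ℕ) (hq : 2 ≤ q) :
    (∃ α : ℝ, 0 < α ∧ ∀ u : ℂ, ‖u‖ < α →
      Tendsto
        (fun N : ℕ =>
          Matrix.det (Matrix.of fun i j : (Finset.range N : Finset ℕ) => stmt4M q u i.1 j.1))
        atTop (nhds ((1 - (q : ℂ) ^ 2 * u ^ 2) / (1 - (q : ℂ) * u ^ 2)))) ∧
    (∃ α : ℝ, 0 < α ∧ ∀ u : ℂ, 0 < ‖u‖ → ‖u‖ < α →
      ¬ ∃ L : ℂ, Tendsto
        (fun F : Finset ℕ => Matrix.det (Matrix.of fun i j : F => stmt4M q u i.1 j.1))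
        atTop (nhds L)) := by
  have hα : (0 : ℝ) < 1 / q := by positivity
  have hsegments : ∀ u : ℂ, ‖u‖ < 1 / q →
      Tendsto (fun N => Matrix.minorDet (stmt4M q u) (Finset.range N)) atTop
        (𝓝 ((1 - (q : ℂ) ^ 2 * u ^ 2) / (1 - (q : ℂ) * u ^ 2))) := fun u hu => by
    simpa only [Matrix.minorDet_range] using
      tendsto_det_leadingMinor_stmt4M q (norm_mul_sq_lt_one (by omega) hu).1
  refine ⟨⟨1 / q, hα, hsegments⟩, 1 / q, hα, fun u hu0 hu ⟨L, hL⟩ => ?_⟩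
  obtain ⟨hsmall, hsmall'⟩ := norm_mul_sq_lt_one (by omega) hu
  have hLval := tendsto_nhds_unique (hL.comp tendsto_finset_range) (hsegments u hu)
  have hL0 : L ≠ 0 := by
    rw [hLval]
    exact div_ne_zero (sub_ne_zero.2 fun h => by simp [← h] at hsmall')
      (sub_ne_zero.2 fun h => by simp [← h] at hsmall)
  have hfix := (stmt4M_isTridiagonal q u).mul_eq_of_tendsto_minorDet (stmt4M_self q u) hL
  have hq0 : (q : ℂ) ≠ 0 := Nat.cast_ne_zero.2 (by omega)
  exact mul_ne_zero (mul_ne_zero hq0 (pow_ne_zero 2 (norm_pos_iff.1 hu0))) hL0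
    (by linear_combination hfix)
end

section
/- Let n ≥ 1, q > 0, and let A be an n × n real matrix with all entries nonnegative, all column sums equal to q (∑_i A i j = q for every j), and A indecomposable, meaning there is no partition of the index set into two nonempty disjoint subsets S and T with A i j = 0 for all i ∈ S and j ∈ T. Then there exist Δ ∈ ℕ with Δ ≥ 1, ε > 0 with ε < q, and C ≥ 0 such that for all m ≥ 1: |trace(A^m) − (Δ · q^m if Δ divides m, and 0 otherwise)| ≤ C · (q − ε)^m. -/
/-!
Normalise to the column-stochastic matrix `B = q⁻¹ • A`, which is irreducible. Let `Δ` be the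
gcd of the lengths of the cycles through a base index `z`. Labelling each index by the length of
a walk from it to `z`, taken mod `Δ`, splits the indices into `Δ` cyclic classes, and a positive
entry of `B ^ m` joins classes whose labels differ by `m`; so `trace (B ^ m) = 0` unless `Δ ∣ m`.
Since all large multiples of `Δ` are cycle lengths at `z`, some power `P = B ^ s` with `Δ ∣ s` is
positive exactly on pairs in the same class. By Doeblin's argument `P` contracts the `ℓ¹`-norm
of vectors with zero sum on every class by a factor `θ < 1`, so for `Δ ∣ m = s a + b` all columns
of `B ^ m = P ^ a B ^ b` in one class are within `2 θ ^ a` of a common column of `P ^ a`, a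
probability vector on that class; summing the diagonal gives `trace (B ^ m) = Δ + O(θ ^ a)`.
-/

open Finset Filter Matrix

namespace Matrix

variable {ι R : Type*} [Fintype ι] [DecidableEq ι]

section Period

variable [Semiring R] [Preorder R] {B : Matrix ι ι R}

noncomputable def period (B : Matrix ι ι R) (z : ι) : ℕ :=
  Nat.setGcd {m | 0 < (B ^ m) z z}

lemma period_dvd {z : ι} {m : ℕ} (h : 0 < (B ^ m) z z) : period B z ∣ m :=
  Nat.setGcd_dvd_of_mem h

lemma class_eq_of_pow_apply_pos {Δ : ℕ} {c : ι → ZMod Δ}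
    (hc : ∀ (m : ℕ) i j, 0 < (B ^ m) i j → c i = c j + m)
    {m : ℕ} (hm : Δ ∣ m) {i j : ι} (h : 0 < (B ^ m) i j) : c i = c j := by
  rw [hc m i j h, (ZMod.natCast_eq_zero_iff m Δ).2 hm, add_zero]

end Period

variable [Field R] [LinearOrder R] [IsStrictOrderedRing R]

section Positivity

variable {A : Matrix ι ι R}

lemma pow_add_apply_pos (hA : ∀ i j, 0 ≤ A i j) {a b : ℕ} {i k j : ι}
    (h₁ : 0 < (A ^ a) i k) (h₂ : 0 < (A ^ b) k j) : 0 < (A ^ (a + b)) i j := by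
  rw [pow_add, mul_apply]
  exact (sum_pos_iff_of_nonneg fun l _ =>
    mul_nonneg (pow_apply_nonneg hA a i l) (pow_apply_nonneg hA b l j)).2
      ⟨k, mem_univ k, mul_pos h₁ h₂⟩

lemma exists_pos_apply_of_mem_colStochastic (hA : A ∈ colStochastic R ι) (j : ι) :
    ∃ i, 0 < A i j := by
  obtain ⟨i, -, hi⟩ := exists_lt_of_sum_lt (s := univ) (f := 0) (g := fun i => A i j)
    (by simp [sum_col_of_mem_colStochastic hA])
  exact ⟨i, hi⟩

lemma isIrreducible_of_indecomposable (hA : ∀ i j, 0 ≤ A i j) (hcol : ∀ j, ∃ i, 0 < A i j)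
    (h : ¬ ∃ S T : Set ι, S.Nonempty ∧ T.Nonempty ∧ Disjoint S T ∧ S ∪ T = Set.univ ∧
      ∀ i ∈ S, ∀ j ∈ T, A i j = 0) :
    A.IsIrreducible := by
  have reach : ∀ i j, ∃ m, 0 < (A ^ m) i j := by
    intro i j
    by_contra hij
    set T : Set ι := {k | ∃ m, 0 < (A ^ m) k j}
    refine h ⟨Tᶜ, T, ⟨i, hij⟩, ⟨j, 0, by simp⟩, disjoint_compl_left, Set.compl_union_self T,
      fun k hk l ⟨m, hm⟩ => ?_⟩
    by_contra hkl
    have hkl : 0 < (A ^ 1) k l := by rw [pow_one]; exact (hA k l).lt_of_ne' hkl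
    exact hk ⟨1 + m, pow_add_apply_pos hA hkl hm⟩
  refine (isIrreducible_iff_exists_pow_pos hA).2 fun i j => ?_
  obtain ⟨l, hl⟩ := hcol j
  obtain ⟨m, hm⟩ := reach i l
  exact ⟨m + 1, m.succ_pos, pow_add_apply_pos hA hm (by rwa [pow_one])⟩

lemma IsIrreducible.exists_pow_apply_pos (hA : A.IsIrreducible) (i j : ι) :
    ∃ m, 0 < (A ^ m) i j :=
  let ⟨m, _, hm⟩ := (isIrreducible_iff_exists_pow_pos hA.nonneg).1 hA i j
  ⟨m, hm⟩

end Positivity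

section CycleLengths

variable {B : Matrix ι ι R}

lemma exists_forall_ge_pow_apply_self_pos (hB : ∀ i j, 0 ≤ B i j) (z : ι) :
    ∃ N, ∀ m ≥ N, period B z ∣ m → 0 < (B ^ m) z z := by
  obtain ⟨N, hN⟩ := Nat.exists_mem_closure_of_ge {m | 0 < (B ^ m) z z}
  exact ⟨N, fun m hm hdvd => AddSubmonoid.closure_induction (fun _ h => h) (by simp)
    (fun _ _ _ _ ha hb => pow_add_apply_pos hB ha hb) (hN m hm hdvd)⟩

lemma period_pos (hB : B ∈ colStochastic R ι) (hirr : B.IsIrreducible) (z : ι) :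
    0 < period B z := by
  obtain ⟨i, hi⟩ := exists_pos_apply_of_mem_colStochastic hB z
  obtain ⟨l, hl⟩ := hirr.exists_pow_apply_pos z i
  have hcycle : 0 < (B ^ (l + 1)) z z := pow_add_apply_pos hB.1 hl (by rwa [pow_one])
  refine Nat.pos_of_ne_zero fun h => ?_
  simpa using Nat.setGcd_eq_zero_iff.1 h hcycle

lemma exists_cyclic_classes (hirr : B.IsIrreducible) (z : ι) :
    ∃ c : ι → ZMod (period B z), ∀ (m : ℕ) i j, 0 < (B ^ m) i j → c i = c j + m := by
  choose a ha using fun i => hirr.exists_pow_apply_pos i z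
  -- two walks from `i` to `z`, closed up by a walk from `z` to `i`, give two cycles through `z`
  have walk_length : ∀ i (m : ℕ), 0 < (B ^ m) i z → (m : ZMod (period B z)) = a i := by
    intro i m hm
    obtain ⟨l, hl⟩ := hirr.exists_pow_apply_pos z i
    have h₁ := period_dvd (pow_add_apply_pos hirr.nonneg hl hm)
    have h₂ := period_dvd (pow_add_apply_pos hirr.nonneg hl (ha i))
    rw [ZMod.natCast_eq_natCast_iff]
    exact Nat.ModEq.add_left_cancel' l
      ((Nat.modEq_zero_iff_dvd.2 h₁).trans (Nat.modEq_zero_iff_dvd.2 h₂).symm)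
  refine ⟨fun i => a i, fun m i j h => ?_⟩
  show (a i : ZMod (period B z)) = a j + m
  rw [← walk_length i (m + a j) (pow_add_apply_pos hirr.nonneg h (ha j))]
  push_cast
  ring

end CycleLengths

section CyclicClasses

variable {B : Matrix ι ι R} {Δ : ℕ} {c : ι → ZMod Δ}

lemma trace_pow_eq_zero_of_not_dvd (hB : ∀ i j, 0 ≤ B i j)
    (hc : ∀ (m : ℕ) i j, 0 < (B ^ m) i j → c i = c j + m) {m : ℕ} (hm : ¬ Δ ∣ m) :
    trace (B ^ m) = 0 := by
  refine sum_eq_zero fun i _ => (pow_apply_nonneg hB m i i).eq_or_lt.elim Eq.symm fun h => ?_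
  refine absurd ((ZMod.natCast_eq_zero_iff m Δ).1 ?_) hm
  simpa using hc m i i h

lemma surjective_of_cyclic_classes [NeZero Δ] [Nonempty ι] (hB : B ∈ colStochastic R ι)
    (hc : ∀ (m : ℕ) i j, 0 < (B ^ m) i j → c i = c j + m) : Function.Surjective c := by
  intro t
  obtain z := Classical.arbitrary ι
  obtain ⟨i, hi⟩ := exists_pos_apply_of_mem_colStochastic (pow_mem hB (t - c z).val) z
  exact ⟨i, by rw [hc _ i z hi, ZMod.natCast_zmod_val, add_sub_cancel]⟩

lemma eventually_pow_period_mul_apply_pos (hirr : B.IsIrreducible) {z : ι}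
    {c : ι → ZMod (period B z)} (hc : ∀ (m : ℕ) i j, 0 < (B ^ m) i j → c i = c j + m)
    (hz : 0 < period B z) {i j : ι} (hij : c i = c j) :
    ∀ᶠ k in atTop, 0 < (B ^ (period B z * k)) i j := by
  obtain ⟨a, ha⟩ := hirr.exists_pow_apply_pos i z
  obtain ⟨b, hb⟩ := hirr.exists_pow_apply_pos z j
  have hab : period B z ∣ a + b := by
    rw [← ZMod.natCast_eq_zero_iff, Nat.cast_add]
    have := hc a i z ha
    rw [hc b z j hb, hij] at this
    linear_combination -this
  obtain ⟨N, hN⟩ := exists_forall_ge_pow_apply_self_pos hirr.nonneg z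
  filter_upwards [eventually_ge_atTop (N + a + b)] with k hk
  have hk' : k ≤ period B z * k := Nat.le_mul_of_pos_left k hz
  obtain ⟨r, hr⟩ : ∃ r, period B z * k = a + r + b := ⟨period B z * k - a - b, by omega⟩
  have hr_dvd : period B z ∣ r := (Nat.dvd_add_right hab).1
    (by rw [show a + b + r = period B z * k by omega]; exact dvd_mul_right _ _)
  have hzz : 0 < (B ^ r) z z := hN r (by omega) hr_dvd
  rw [hr]
  exact pow_add_apply_pos hirr.nonneg (pow_add_apply_pos hirr.nonneg ha hzz) hb

lemma exists_pow_apply_pos_of_class_eq (hirr : B.IsIrreducible) {z : ι}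
    {c : ι → ZMod (period B z)} (hc : ∀ (m : ℕ) i j, 0 < (B ^ m) i j → c i = c j + m)
    (hz : 0 < period B z) :
    ∃ s, 0 < s ∧ period B z ∣ s ∧ ∀ i j, c i = c j → 0 < (B ^ s) i j := by
  obtain ⟨k, hk, hpos⟩ := ((eventually_gt_atTop 0).and <| eventually_all.2 fun i : ι =>
    eventually_all.2 fun j : ι => eventually_imp_distrib_left.2 fun hij =>
      eventually_pow_period_mul_apply_pos hirr hc hz hij).exists
  exact ⟨period B z * k, Nat.mul_pos hz hk, dvd_mul_right _ _, hpos⟩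

end CyclicClasses

section Doeblin

variable {κ : Type*} [DecidableEq κ] {c : ι → κ} {M : Matrix ι ι R}

lemma sum_filter_apply_of_class (hM : M ∈ colStochastic R ι)
    (hMc : ∀ i j, 0 < M i j → c i = c j) (γ : κ) (j : ι) :
    ∑ i with c i = γ, M i j = if c j = γ then 1 else 0 := by
  have hzero : ∀ i, c i ≠ c j → M i j = 0 := fun i hi =>
    (hM.1 i j).eq_or_lt.elim Eq.symm fun h => absurd (hMc i j h) hi
  split_ifs with hj
  · rw [← sum_col_of_mem_colStochastic hM j]
    exact sum_subset (filter_subset _ _) fun i _ hi =>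
      hzero i fun h => hi (mem_filter.2 ⟨mem_univ i, h.trans hj⟩)
  · exact sum_eq_zero fun i hi => hzero i fun h => hj (h ▸ (mem_filter.1 hi).2)

lemma sum_filter_mulVec_of_class (hM : M ∈ colStochastic R ι)
    (hMc : ∀ i j, 0 < M i j → c i = c j) (x : ι → R) (γ : κ) :
    ∑ i with c i = γ, (M *ᵥ x) i = ∑ i with c i = γ, x i := by
  simp only [mulVec, dotProduct]
  rw [sum_comm]
  simp_rw [← sum_mul, sum_filter_apply_of_class hM hMc, ite_mul, one_mul, zero_mul, sum_filter]

lemma sum_abs_mulVec_le {δ : R} (hM : M ∈ colStochastic R ι) (hδ₀ : 0 ≤ δ)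
    (hδ : ∀ i j, c i = c j → δ ≤ M i j) {x : ι → R} (hx : ∀ γ, ∑ i with c i = γ, x i = 0) :
    ∑ i, |(M *ᵥ x) i| ≤ (1 - δ) * ∑ i, |x i| := by
  set Q : Matrix ι ι R := fun i j => M i j - if c i = c j then δ else 0
  have hQ : ∀ i j, 0 ≤ Q i j := fun i j => by
    by_cases h : c i = c j
    · simpa [Q, h] using hδ i j h
    · simpa [Q, h] using hM.1 i j
  -- the part `δ • [c i = c j]` of `M` annihilates `x`, and what is left has column sums `≤ 1 - δ`
  have hMx : M *ᵥ x = Q *ᵥ x := by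
    ext i
    have hcls : ∑ j, (if c i = c j then δ else 0) * x j = 0 := by
      simp_rw [ite_mul, zero_mul, ← sum_filter, ← mul_sum, eq_comm (a := c i), hx, mul_zero]
    simp only [mulVec, dotProduct, Q, sub_mul, sum_sub_distrib, hcls, sub_zero]
  have hQcol : ∀ j, ∑ i, Q i j ≤ 1 - δ := fun j => by
    have hdiag : δ ≤ ∑ i, if c i = c j then δ else 0 := by
      simpa using single_le_sum (f := fun i => if c i = c j then δ else 0)
        (fun i _ => by split_ifs <;> simp [hδ₀]) (mem_univ j)
    simp only [Q, sum_sub_distrib, sum_col_of_mem_colStochastic hM j]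
    exact sub_le_sub_left hdiag 1
  calc ∑ i, |(M *ᵥ x) i| = ∑ i, |∑ j, Q i j * x j| := by rw [hMx]; rfl
    _ ≤ ∑ i, ∑ j, Q i j * |x j| := sum_le_sum fun i _ => (abs_sum_le_sum_abs _ _).trans_eq <|
        sum_congr rfl fun j _ => by rw [abs_mul, abs_of_nonneg (hQ i j)]
    _ = ∑ j, (∑ i, Q i j) * |x j| := by rw [sum_comm]; simp_rw [sum_mul]
    _ ≤ ∑ j, (1 - δ) * |x j| :=
        sum_le_sum fun j _ => mul_le_mul_of_nonneg_right (hQcol j) (abs_nonneg _)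
    _ = (1 - δ) * ∑ j, |x j| := (mul_sum _ _ _).symm


lemma exists_sum_abs_pow_mulVec_le [Nonempty ι] (hM : M ∈ colStochastic R ι)
    (hMc : ∀ i j, 0 < M i j → c i = c j) (hMpos : ∀ i j, c i = c j → 0 < M i j) :
    ∃ θ : R, 0 ≤ θ ∧ θ < 1 ∧ ∀ (a : ℕ) (x : ι → R), (∀ γ, ∑ i with c i = γ, x i = 0) →
      ∑ i, |(M ^ a *ᵥ x) i| ≤ θ ^ a * ∑ i, |x i| := by
  set f : ι × ι → R := fun p => if c p.1 = c p.2 then M p.1 p.2 else 1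
  set δ := univ.inf' univ_nonempty f
  have hδ₀ : 0 < δ := (lt_inf'_iff _).2 fun p _ => by
    by_cases h : c p.1 = c p.2
    · simpa [f, h] using hMpos p.1 p.2 h
    · simp [f, h]
  have hδ : ∀ i j, c i = c j → δ ≤ M i j := fun i j h => by
    simpa [f, h] using inf'_le f (mem_univ (i, j))
  obtain j := Classical.arbitrary ι
  have hδ₁ : δ ≤ 1 := (hδ j j rfl).trans (le_one_of_mem_colStochastic hM)
  refine ⟨1 - δ, by linarith, by linarith, fun a => ?_⟩
  induction a with
  | zero => simp
  | succ a ih =>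
    intro x hx
    rw [pow_succ, ← mulVec_mulVec]
    calc ∑ i, |(M ^ a *ᵥ M *ᵥ x) i| ≤ (1 - δ) ^ a * ∑ i, |(M *ᵥ x) i| :=
          ih _ fun γ => (sum_filter_mulVec_of_class hM hMc x γ).trans (hx γ)
      _ ≤ (1 - δ) ^ a * ((1 - δ) * ∑ i, |x i|) :=
          mul_le_mul_of_nonneg_left (sum_abs_mulVec_le hM hδ₀.le hδ hx) (by bound)
      _ = (1 - δ) ^ (a + 1) * ∑ i, |x i| := by ring

lemma abs_mul_apply_sub_mul_apply_le {N Q : Matrix ι ι R} {θ : R} (hM : M ∈ colStochastic R ι)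
    (hMc : ∀ i j, 0 < M i j → c i = c j) (hN : N ∈ colStochastic R ι)
    (hNc : ∀ i j, 0 < N i j → c i = c j) (hθ : 0 ≤ θ)
    (hQ : ∀ x : ι → R, (∀ γ, ∑ i with c i = γ, x i = 0) → ∑ i, |(Q *ᵥ x) i| ≤ θ * ∑ i, |x i|)
    {j j' : ι} (hj : c j = c j') (i : ι) :
    |(Q * M) i j - (Q * N) i j'| ≤ 2 * θ := by
  set x : ι → R := fun k => M k j - N k j'
  have hx : ∀ γ, ∑ k with c k = γ, x k = 0 := fun γ => by
    simp [x, sum_sub_distrib, sum_filter_apply_of_class hM hMc,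
      sum_filter_apply_of_class hN hNc, hj]
  have hx₁ : ∑ k, |x k| ≤ 2 := by
    calc ∑ k, |x k| ≤ ∑ k, (M k j + N k j') := sum_le_sum fun k _ =>
          (abs_sub _ _).trans_eq (by rw [abs_of_nonneg (hM.1 k j), abs_of_nonneg (hN.1 k j')])
      _ = 2 := by rw [sum_add_distrib, sum_col_of_mem_colStochastic hM,
          sum_col_of_mem_colStochastic hN]; norm_num
  have hQx : (Q * M) i j - (Q * N) i j' = (Q *ᵥ x) i := by
    simp [x, mul_apply, mulVec, dotProduct, mul_sub, sum_sub_distrib]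
  calc |(Q * M) i j - (Q * N) i j'| = |(Q *ᵥ x) i| := by rw [hQx]
    _ ≤ ∑ k, |(Q *ᵥ x) k| :=
        single_le_sum (f := fun k => |(Q *ᵥ x) k|) (fun _ _ => abs_nonneg _) (mem_univ i)
    _ ≤ θ * ∑ k, |x k| := hQ x hx
    _ ≤ 2 * θ := by nlinarith

lemma sum_apply_section_eq_card [Fintype κ] (hM : M ∈ colStochastic R ι)
    (hMc : ∀ i j, 0 < M i j → c i = c j) {r : κ → ι} (hr : ∀ γ, c (r γ) = γ) :
    ∑ i, M i (r (c i)) = Fintype.card κ := by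
  rw [← sum_fiberwise univ c]
  calc ∑ γ, ∑ i with c i = γ, M i (r (c i)) = ∑ γ, ∑ i with c i = γ, M i (r γ) :=
        sum_congr rfl fun γ _ => sum_congr rfl fun i hi => by rw [(mem_filter.1 hi).2]
    _ = Fintype.card κ := by simp [sum_filter_apply_of_class hM hMc, hr]

end Doeblin

lemma abs_trace_pow_sub_le {B : Matrix ι ι R} {Δ : ℕ} [NeZero Δ] {c : ι → ZMod Δ}
    (hB : B ∈ colStochastic R ι) (hc : ∀ (m : ℕ) i j, 0 < (B ^ m) i j → c i = c j + m)
    (hsurj : Function.Surjective c) {s : ℕ} (hs : Δ ∣ s) {θ : R} (hθ : 0 ≤ θ)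
    (hcontr : ∀ (a : ℕ) (x : ι → R), (∀ γ, ∑ i with c i = γ, x i = 0) →
      ∑ i, |((B ^ s) ^ a *ᵥ x) i| ≤ θ ^ a * ∑ i, |x i|)
    {m : ℕ} (hm : Δ ∣ m) :
    |trace (B ^ m) - Δ| ≤ 2 * Fintype.card ι * θ ^ (m / s) := by
  set a := m / s
  set Q := (B ^ s) ^ a with hQ_def
  set r := Function.surjInv hsurj
  have hBm : B ^ m = Q * B ^ (m % s) := by rw [hQ_def, ← pow_mul, ← pow_add, Nat.div_add_mod]
  have hQ : ∀ i j, 0 < Q i j → c i = c j := fun i j h =>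
    class_eq_of_pow_apply_pos hc (hs.mul_right a) (by rwa [hQ_def, ← pow_mul] at h)
  have hΔ : ∑ i, Q i (r (c i)) = Δ := by
    rw [sum_apply_section_eq_card (pow_mem (pow_mem hB s) a) hQ
      (Function.surjInv_eq hsurj), ZMod.card]
  -- `Q` merges column `i` of `B ^ (m % s)` with the unit column at the representative of `c i`
  have hcol : ∀ i, |(Q * B ^ (m % s)) i i - Q i (r (c i))| ≤ 2 * θ ^ a := fun i => by
    simpa only [mul_one] using abs_mul_apply_sub_mul_apply_le (pow_mem hB _)
      (fun i j => class_eq_of_pow_apply_pos hc ((Nat.dvd_mod_iff hs).2 hm))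
      (one_mem _) (fun i j h => class_eq_of_pow_apply_pos hc (dvd_zero Δ) (by rwa [pow_zero]))
      (pow_nonneg hθ a) (hcontr a) (Function.surjInv_eq hsurj (c i)).symm i
  calc |trace (B ^ m) - Δ|
      = |∑ i, ((Q * B ^ (m % s)) i i - Q i (r (c i)))| := by
        rw [sum_sub_distrib, hΔ, hBm]; rfl
    _ ≤ ∑ i, |(Q * B ^ (m % s)) i i - Q i (r (c i))| := abs_sum_le_sum_abs _ _
    _ ≤ ∑ _i : ι, 2 * θ ^ a := sum_le_sum fun i _ => hcol i
    _ = 2 * Fintype.card ι * θ ^ a := by rw [sum_const, card_univ, nsmul_eq_mul]; ring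

lemma exists_pow_div_le_mul_pow {θ : ℝ} (hθ₀ : 0 ≤ θ) (hθ₁ : θ < 1) {s : ℕ} (hs : 0 < s) :
    ∃ ρ : ℝ, 0 < ρ ∧ ρ < 1 ∧ ∃ K : ℝ, 0 ≤ K ∧ ∀ m, θ ^ (m / s) ≤ K * ρ ^ m := by
  set y := max θ (1 / 2)
  have hy₀ : 0 < y := lt_max_of_lt_right (by norm_num)
  have hy₁ : y < 1 := max_lt hθ₁ (by norm_num)
  set ρ := y ^ (s⁻¹ : ℝ)
  have hρ₀ : 0 < ρ := Real.rpow_pos_of_pos hy₀ _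
  have hρ₁ : ρ < 1 := Real.rpow_lt_one hy₀.le hy₁ (by positivity)
  have hρs : ρ ^ s = y := Real.rpow_inv_natCast_pow hy₀.le hs.ne'
  refine ⟨ρ, hρ₀, hρ₁, y⁻¹, by positivity, fun m => ?_⟩
  calc θ ^ (m / s) ≤ y ^ (m / s) := pow_le_pow_left₀ hθ₀ (le_max_left _ _) _
    _ = y⁻¹ * ρ ^ (s * (m / s + 1)) := by rw [pow_mul, hρs, pow_succ]; field_simp
    _ ≤ y⁻¹ * ρ ^ m := mul_le_mul_of_nonneg_left
        (pow_le_pow_of_le_one hρ₀.le hρ₁.le (Nat.lt_mul_div_succ m hs).le) (by positivity)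

theorem IsIrreducible.exists_abs_trace_pow_sub_le [Nonempty ι] {B : Matrix ι ι ℝ}
    (hB : B ∈ colStochastic ℝ ι) (hirr : B.IsIrreducible) :
    ∃ Δ : ℕ, 1 ≤ Δ ∧ ∃ ρ : ℝ, 0 < ρ ∧ ρ < 1 ∧ ∃ C : ℝ, 0 ≤ C ∧
      ∀ m : ℕ, |trace (B ^ m) - if Δ ∣ m then (Δ : ℝ) else 0| ≤ C * ρ ^ m := by
  obtain z := Classical.arbitrary ι
  have hΔ := period_pos hB hirr z
  have : NeZero (period B z) := ⟨hΔ.ne'⟩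
  obtain ⟨c, hc⟩ := exists_cyclic_classes hirr z
  obtain ⟨s, hs₀, hsΔ, hs⟩ := exists_pow_apply_pos_of_class_eq hirr hc hΔ
  obtain ⟨θ, hθ₀, hθ₁, hcontr⟩ := exists_sum_abs_pow_mulVec_le (pow_mem hB s)
    (fun i j => class_eq_of_pow_apply_pos hc hsΔ) hs
  obtain ⟨ρ, hρ₀, hρ₁, K, hK, hθρ⟩ := exists_pow_div_le_mul_pow hθ₀ hθ₁ hs₀
  refine ⟨period B z, hΔ, ρ, hρ₀, hρ₁, 2 * Fintype.card ι * K, by positivity, fun m => ?_⟩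
  split_ifs with hm
  · calc _ ≤ 2 * Fintype.card ι * θ ^ (m / s) :=
          abs_trace_pow_sub_le hB hc (surjective_of_cyclic_classes hB hc) hsΔ hθ₀ hcontr hm
      _ ≤ 2 * Fintype.card ι * (K * ρ ^ m) := by gcongr; exact hθρ m
      _ = _ := by ring
  · rw [trace_pow_eq_zero_of_not_dvd hB.1 hc hm, sub_zero, abs_zero]
    positivity

end Matrix

/-- Perron–Frobenius asymptotics for the trace of powers of a
nonnegative indecomposable matrix with all column sums equal to `q`. -/
theorem stmt6 (n : ℕ) (hn : 1 ≤ n) (q : ℝ) (hq : 0 < q)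
    (A : Matrix (Fin n) (Fin n) ℝ)
    (hpos : ∀ i j, 0 ≤ A i j) (hcol : ∀ j, ∑ i, A i j = q)
    (hind : ¬ ∃ S T : Set (Fin n), S.Nonempty ∧ T.Nonempty ∧ Disjoint S T ∧
      S ∪ T = Set.univ ∧ ∀ i ∈ S, ∀ j ∈ T, A i j = 0) :
    ∃ Δ : ℕ, 1 ≤ Δ ∧ ∃ ε : ℝ, 0 < ε ∧ ε < q ∧ ∃ C : ℝ, 0 ≤ C ∧
      ∀ m : ℕ, 1 ≤ m →
        |Matrix.trace (A ^ m) - (if Δ ∣ m then (Δ : ℝ) * q ^ m else 0)|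
          ≤ C * (q - ε) ^ m := by
  have : Nonempty (Fin n) := ⟨⟨0, hn⟩⟩
  set B := q⁻¹ • A
  have hB : B ∈ colStochastic ℝ (Fin n) := mem_colStochastic_iff_sum.2
    ⟨fun i j => mul_nonneg (inv_nonneg.2 hq.le) (hpos i j),
      fun j => by simp [B, ← mul_sum, hcol, hq.ne']⟩
  have hirr : B.IsIrreducible := isIrreducible_of_indecomposable hB.1
    (exists_pos_apply_of_mem_colStochastic hB) (by simpa [B, hq.ne'] using hind)
  obtain ⟨Δ, hΔ, ρ, hρ₀, hρ₁, C, hC, hbound⟩ := hirr.exists_abs_trace_pow_sub_le hB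
  refine ⟨Δ, hΔ, q * (1 - ρ), by nlinarith, by nlinarith, C, hC, fun m _ => ?_⟩
  have hA : A = q • B := by simp [B, smul_smul, hq.ne']
  have hscale : (trace (A ^ m) - if Δ ∣ m then (Δ : ℝ) * q ^ m else 0) =
      q ^ m * (trace (B ^ m) - if Δ ∣ m then (Δ : ℝ) else 0) := by
    rw [hA, smul_pow, trace_smul, smul_eq_mul]
    split_ifs <;> ring
  calc |trace (A ^ m) - if Δ ∣ m then (Δ : ℝ) * q ^ m else 0|
      = q ^ m * |trace (B ^ m) - if Δ ∣ m then (Δ : ℝ) else 0| := by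
        rw [hscale, abs_mul, abs_of_pos (pow_pos hq m)]
    _ ≤ q ^ m * (C * ρ ^ m) := by gcongr; exact hbound m
    _ = C * (q - q * (1 - ρ)) ^ m := by ring
end

section
/- For n ≥ 1 let P_n be the set of functions v : ℤ/2nℤ → ℕ such that |v(j+1) − v(j)| = 1 (as integers) for all j, and there is no j with v(j+1) = v(j) − 1, v(j+2) = v(j+1) + 1 and v(j+1) ≥ 1 (no descent immediately followed by an ascent at a positive level, cyclically). Then each P_n is finite, |P_1| = 2, and |P_{n+1}| = 2·|P_n| + 2 for all n ≥ 1. -/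
/-!
A loop `v ∈ P_n` is a function on the cycle `ZMod (2n)` moving by `±1` at each step whose
strict local minima all lie at level `0`. Walking downhill from any point therefore never turns
back before reaching a zero, so `v x` is at least the cyclic distance from `x` to the zero set `Z`
of `v`; being `1`-Lipschitz, `v` is at most that distance, hence equal to it. Conversely, the
cyclic distance to any nonempty `Z` whose points all have the same parity is such a loop: parity
forces each step to be `±1`, and a point at positive distance has a neighbour closer to `Z`. So
`P_n` is in bijection with the pairs (parity, nonempty subset of the `n` points of that parity),
and `|P_n| = 2 (2 ^ n - 1)`.
-/

/-- `stmt7P n` encodes the based closed paths of length `2n` with nonzero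
weight in a Nagao ray: `v j` is the position on the ray after `j` steps, each
step changes the position by `±1`, and a descent immediately followed by an
ascent is forbidden at every positive level (but allowed at level `0`). -/
def stmt7P (n : ℕ) : Set (ZMod (2 * n) → ℕ) :=
  {v | (∀ j, ((v (j + 1) : ℤ) - (v j : ℤ)).natAbs = 1) ∧
    ¬ ∃ j, (v (j + 1) : ℤ) = (v j : ℤ) - 1 ∧ v (j + 2) = v (j + 1) + 1 ∧ 1 ≤ v (j + 1)}

namespace ZMod

variable {m : ℕ}

lemma natAbs_valMinAbs_intCast_le (k : ℤ) : (k : ZMod m).valMinAbs.natAbs ≤ k.natAbs := by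
  rcases eq_zero_or_neZero m with rfl | _
  · rfl
  · exact natAbs_min_of_le_div_two m _ k (coe_valMinAbs _) (natAbs_valMinAbs_le _)

lemma natAbs_valMinAbs_add_le_add (a b : ZMod m) :
    (a + b).valMinAbs.natAbs ≤ a.valMinAbs.natAbs + b.valMinAbs.natAbs :=
  (natAbs_valMinAbs_add_le a b).trans (Int.natAbs_add_le _ _)

lemma natAbs_valMinAbs_sub_le (a b : ZMod m) :
    (a - b).valMinAbs.natAbs ≤ a.valMinAbs.natAbs + b.valMinAbs.natAbs := by
  simpa [sub_eq_add_neg] using natAbs_valMinAbs_add_le_add a (-b)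

lemma natAbs_valMinAbs_le_one {u : ZMod m} (hu : u = 1 ∨ u = -1) :
    u.valMinAbs.natAbs ≤ 1 := by
  rcases hu with rfl | rfl
  · simpa using natAbs_valMinAbs_intCast_le (m := m) 1
  · simpa using natAbs_valMinAbs_intCast_le (m := m) 1

lemma exists_natAbs_valMinAbs_add_lt {a : ZMod m} (ha : a ≠ 0) :
    ∃ u : ZMod m, (u = 1 ∨ u = -1) ∧ (a + u).valMinAbs.natAbs < a.valMinAbs.natAbs := by
  have hk : a.valMinAbs ≠ 0 := by simpa using ha
  rcases hk.lt_or_gt with hneg | hpos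
  · refine ⟨1, .inl rfl, ?_⟩
    have := natAbs_valMinAbs_intCast_le (m := m) (a.valMinAbs + 1)
    push_cast at this
    omega
  · refine ⟨-1, .inr rfl, ?_⟩
    have := natAbs_valMinAbs_intCast_le (m := m) (a.valMinAbs - 1)
    push_cast at this
    rw [← sub_eq_add_neg]
    omega

lemma natCast_natAbs_valMinAbs_eq_castHom (h2 : 2 ∣ m) (a : ZMod m) :
    (a.valMinAbs.natAbs : ZMod 2) = castHom h2 (ZMod 2) a := by
  conv_rhs => rw [← coe_valMinAbs a, map_intCast]
  rcases Int.natAbs_eq a.valMinAbs with h | h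
  · conv_rhs => rw [h]
    simp
  · conv_rhs => rw [h]
    simp [ZMod.neg_eq_self_mod_two]

end ZMod

open ZMod

variable {m : ℕ}

/-- The conditions of `stmt7P` on a cycle of any length, the forbidden backtracking at a positive
level being recast as: every strict local minimum lies at level `0`. -/
structure IsRayLoop (v : ZMod m → ℕ) : Prop where
  step : ∀ j, v (j + 1) = v j + 1 ∨ v j = v (j + 1) + 1
  eq_zero_of_lt_of_lt : ∀ j, v j < v (j - 1) → v j < v (j + 1) → v j = 0

namespace IsRayLoop

variable {v w : ZMod m → ℕ}

lemma step' (hv : IsRayLoop v) {u : ZMod m} (hu : u = 1 ∨ u = -1) (j : ZMod m) :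
    v (j + u) = v j + 1 ∨ v j = v (j + u) + 1 := by
  rcases hu with rfl | rfl
  · exact hv.step j
  · simpa [← sub_eq_add_neg, or_comm] using hv.step (j - 1)

lemma eq_zero_of_lt_of_lt' (hv : IsRayLoop v) {u : ZMod m} (hu : u = 1 ∨ u = -1) {j : ZMod m}
    (h₁ : v j < v (j - u)) (h₂ : v j < v (j + u)) : v j = 0 := by
  rcases hu with rfl | rfl
  · exact hv.eq_zero_of_lt_of_lt j h₁ h₂
  · rw [sub_neg_eq_add, ← sub_eq_add_neg] at *
    exact hv.eq_zero_of_lt_of_lt j h₂ h₁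

lemma le_add_natAbs (hv : IsRayLoop v) (x : ZMod m) (k : ℤ) : v (x + k) ≤ v x + k.natAbs := by
  induction k using Int.induction_on with
  | zero => simp
  | succ i ih =>
    have := hv.step (x + i)
    push_cast at *
    rw [← add_assoc]
    omega
  | pred i ih =>
    have := hv.step (x + (-i - 1 : ℤ))
    push_cast at *
    rw [show x + (-i - 1) + 1 = x + -i by ring] at this
    omega

lemma le_add_natAbs_valMinAbs (hv : IsRayLoop v) (x y : ZMod m) :
    v y ≤ v x + (y - x).valMinAbs.natAbs := by
  simpa using hv.le_add_natAbs x (y - x).valMinAbs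

lemma exists_zero_of_apply_add_lt (hv : IsRayLoop v) {u : ZMod m} (hu : u = 1 ∨ u = -1)
    (x : ZMod m) (hx : v (x + u) < v x) : ∃ z, v z = 0 ∧ (x - z).valMinAbs.natAbs ≤ v x := by
  induction hd : v x using Nat.strong_induction_on generalizing x with
  | _ d ih =>
    subst hd
    have hy : v (x + u) + 1 = v x := by have := hv.step' hu x; omega
    have hu₁ := natAbs_valMinAbs_le_one hu
    by_cases hy₀ : v (x + u) = 0
    · exact ⟨x + u, hy₀, by simpa using hu₁.trans (by omega)⟩
    have hdesc : v (x + u + u) < v (x + u) := by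
      have := hv.step' hu (x + u)
      have := hv.eq_zero_of_lt_of_lt' hu (j := x + u)
      simp only [add_sub_cancel_right] at this
      omega
    obtain ⟨z, hz, hdist⟩ := ih _ (by omega) (x + u) hdesc rfl
    refine ⟨z, hz, ?_⟩
    calc (x - z).valMinAbs.natAbs = (x + u - z - u).valMinAbs.natAbs := by ring_nf
      _ ≤ (x + u - z).valMinAbs.natAbs + u.valMinAbs.natAbs := natAbs_valMinAbs_sub_le _ _
      _ ≤ v x := by omega

lemma exists_zero_near (hv : IsRayLoop v) (x : ZMod m) :
    ∃ z, v z = 0 ∧ (x - z).valMinAbs.natAbs ≤ v x := by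
  by_cases hx : v x = 0
  · exact ⟨x, hx, by simp⟩
  have := hv.step x
  have := hv.step (x - 1)
  have := hv.eq_zero_of_lt_of_lt x
  rw [sub_add_cancel] at *
  by_cases hfwd : v (x + 1) < v x
  · exact hv.exists_zero_of_apply_add_lt (.inl rfl) x hfwd
  · exact hv.exists_zero_of_apply_add_lt (.inr rfl) x (by rw [← sub_eq_add_neg]; omega)

lemma le_of_forall_eq_zero (hv : IsRayLoop v) (hw : IsRayLoop w)
    (h : ∀ x, w x = 0 → v x = 0) : v ≤ w := by
  intro x
  obtain ⟨z, hz, hdist⟩ := hw.exists_zero_near x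
  have := hv.le_add_natAbs_valMinAbs z x
  rw [h z hz] at this
  exact this.trans (by omega)

lemma eq_of_eq_zero_iff (hv : IsRayLoop v) (hw : IsRayLoop w)
    (h : ∀ x, v x = 0 ↔ w x = 0) : v = w :=
  le_antisymm (hv.le_of_forall_eq_zero hw fun x => (h x).2)
    (hw.le_of_forall_eq_zero hv fun x => (h x).1)

lemma natCast_apply_add_one (hv : IsRayLoop v) (j : ZMod m) :
    (v (j + 1) : ZMod 2) = v j + 1 := by
  rcases hv.step j with h | h <;> rw [h] <;> push_cast
  · rfl
  · rw [add_assoc, one_add_one_eq_two, show (2 : ZMod 2) = 0 from rfl, add_zero]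

lemma natCast_apply_add_intCast (hv : IsRayLoop v) (x : ZMod m) (k : ℤ) :
    (v (x + k) : ZMod 2) = v x + k := by
  induction k using Int.induction_on with
  | zero => simp
  | succ i ih =>
    push_cast at *
    rw [← add_assoc, hv.natCast_apply_add_one, ih, add_assoc]
  | pred i ih =>
    push_cast at *
    have := hv.natCast_apply_add_one (x + (-i - 1))
    rw [show x + (-i - 1) + 1 = x + -i by ring, ih] at this
    linear_combination -this

lemma natCast_apply (hv : IsRayLoop v) (h2 : 2 ∣ m) (x y : ZMod m) :
    (v y : ZMod 2) = v x + castHom h2 (ZMod 2) (y - x) := by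
  have := hv.natCast_apply_add_intCast x (y - x).valMinAbs
  rwa [coe_valMinAbs, add_sub_cancel, ← map_intCast (castHom h2 (ZMod 2)), coe_valMinAbs] at this

end IsRayLoop

def cyclicDistTo (Z : Finset (ZMod m)) (hZ : Z.Nonempty) (x : ZMod m) : ℕ :=
  Z.inf' hZ fun z => (x - z).valMinAbs.natAbs

section cyclicDistTo

variable {Z : Finset (ZMod m)} (hZ : Z.Nonempty)

lemma cyclicDistTo_eq_zero_iff {x : ZMod m} : cyclicDistTo Z hZ x = 0 ↔ x ∈ Z := by
  constructor
  · intro h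
    obtain ⟨z, hz, hxz⟩ := Z.exists_mem_eq_inf' hZ fun z => (x - z).valMinAbs.natAbs
    rw [cyclicDistTo, hxz] at h
    simp only [Int.natAbs_eq_zero, valMinAbs_eq_zero, sub_eq_zero] at h
    exact h ▸ hz
  · intro hx
    have h := Z.inf'_le (fun z => (x - z).valMinAbs.natAbs) hx
    simp only [sub_self, valMinAbs_zero, Int.natAbs_zero] at h
    exact Nat.le_zero.1 h

lemma cyclicDistTo_le_add (x y : ZMod m) :
    cyclicDistTo Z hZ y ≤ cyclicDistTo Z hZ x + (y - x).valMinAbs.natAbs := by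
  obtain ⟨z, hz, hxz⟩ := Z.exists_mem_eq_inf' hZ fun z => (x - z).valMinAbs.natAbs
  calc cyclicDistTo Z hZ y ≤ (y - z).valMinAbs.natAbs := Z.inf'_le _ hz
    _ = (x - z + (y - x)).valMinAbs.natAbs := by ring_nf
    _ ≤ cyclicDistTo Z hZ x + (y - x).valMinAbs.natAbs := by
      rw [cyclicDistTo, hxz]; exact natAbs_valMinAbs_add_le_add _ _

lemma natCast_cyclicDistTo (h2 : 2 ∣ m) {b : ZMod 2}
    (hb : ∀ z ∈ Z, castHom h2 (ZMod 2) z = b) (x : ZMod m) :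
    (cyclicDistTo Z hZ x : ZMod 2) = castHom h2 (ZMod 2) x - b := by
  obtain ⟨z, hz, hxz⟩ := Z.exists_mem_eq_inf' hZ fun z => (x - z).valMinAbs.natAbs
  rw [cyclicDistTo, hxz, natCast_natAbs_valMinAbs_eq_castHom h2, map_sub, hb z hz]

lemma isRayLoop_cyclicDistTo (h2 : 2 ∣ m) {b : ZMod 2}
    (hb : ∀ z ∈ Z, castHom h2 (ZMod 2) z = b) : IsRayLoop (cyclicDistTo Z hZ) where
  step j := by
    have hle₁ := cyclicDistTo_le_add hZ j (j + 1)
    have hle₂ := cyclicDistTo_le_add hZ (j + 1) j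
    have hne : cyclicDistTo Z hZ (j + 1) ≠ cyclicDistTo Z hZ j := fun h => by
      have := congrArg (fun k : ℕ => (k : ZMod 2)) h
      simp only [natCast_cyclicDistTo hZ h2 hb, map_add, map_one, sub_left_inj,
        add_eq_left] at this
      exact one_ne_zero this
    have h₁ := natAbs_valMinAbs_le_one (m := m) (.inl rfl)
    have h₂ := natAbs_valMinAbs_le_one (m := m) (.inr rfl)
    simp only [add_sub_cancel_left, sub_add_cancel_left] at hle₁ hle₂
    omega
  eq_zero_of_lt_of_lt j h₁ h₂ := by
    by_contra hj
    obtain ⟨z, hz, hjz⟩ := Z.exists_mem_eq_inf' hZ fun z => (j - z).valMinAbs.natAbs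
    have hjz' : j - z ≠ 0 := fun h => hj <| (cyclicDistTo_eq_zero_iff hZ).2 (sub_eq_zero.1 h ▸ hz)
    obtain ⟨u, hu, hlt⟩ := exists_natAbs_valMinAbs_add_lt hjz'
    have : cyclicDistTo Z hZ (j + u) < cyclicDistTo Z hZ j := by
      calc cyclicDistTo Z hZ (j + u) ≤ (j + u - z).valMinAbs.natAbs := Z.inf'_le _ hz
        _ = (j - z + u).valMinAbs.natAbs := by ring_nf
        _ < cyclicDistTo Z hZ j := by rwa [cyclicDistTo, hjz]
    rcases hu with rfl | rfl
    · omega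
    · rw [← sub_eq_add_neg] at this; omega

end cyclicDistTo

lemma mem_stmt7P_iff {n : ℕ} {v : ZMod (2 * n) → ℕ} : v ∈ stmt7P n ↔ IsRayLoop v := by
  constructor
  · rintro ⟨hstep, hvalley⟩
    refine ⟨fun j => by have := hstep j; omega, fun j h₁ h₂ => by_contra fun hj => hvalley ?_⟩
    have := hstep (j - 1)
    have := hstep j
    refine ⟨j - 1, ?_, ?_, ?_⟩ <;>
      simp only [sub_add_cancel, show j - 1 + 2 = j + 1 by ring] at * <;> omega
  · intro hv
    refine ⟨fun j => by have := hv.step j; omega, fun ⟨j, h₁, h₂, h₃⟩ => ?_⟩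
    have := hv.eq_zero_of_lt_of_lt (j + 1)
    simp only [add_sub_cancel_right, add_assoc, one_add_one_eq_two] at this h₂
    omega

lemma card_subtype_finset_nonempty (α : Type*) [Fintype α] [DecidableEq α] :
    Fintype.card {S : Finset α // S.Nonempty} = 2 ^ Fintype.card α - 1 := by
  rw [Fintype.card_congr (.subtypeEquivRight fun S : Finset α => Finset.nonempty_iff_ne_empty),
    Fintype.card_subtype_compl, Fintype.card_finset, Fintype.card_subtype_eq]

section Count

variable {n : ℕ}

def pointOfParity (b : ZMod 2) (k : Fin n) : ZMod (2 * n) := ((2 * k + b.val : ℕ) : ZMod (2 * n))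

lemma castHom_pointOfParity (b : ZMod 2) (k : Fin n) :
    castHom (dvd_mul_right 2 n) (ZMod 2) (pointOfParity b k) = b := by
  rw [pointOfParity, map_natCast, Nat.cast_add, Nat.cast_mul, natCast_val, cast_id',
    id, show ((2 : ℕ) : ZMod 2) = 0 from rfl, zero_mul, zero_add]

lemma val_pointOfParity (b : ZMod 2) (k : Fin n) : (pointOfParity b k).val = 2 * k + b.val := by
  have := k.isLt
  have := b.val_lt
  rw [pointOfParity, val_natCast, Nat.mod_eq_of_lt (by omega)]

lemma pointOfParity_injective (b : ZMod 2) : Function.Injective (pointOfParity (n := n) b) :=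
  fun k l h => Fin.ext <| by
    have := congrArg ZMod.val h
    simp only [val_pointOfParity] at this
    omega

def rayLoopOf (p : ZMod 2 × {S : Finset (Fin n) // S.Nonempty}) : ZMod (2 * n) → ℕ :=
  cyclicDistTo (p.2.1.image (pointOfParity p.1)) (p.2.2.image _)

lemma rayLoopOf_eq_zero_iff (p : ZMod 2 × {S : Finset (Fin n) // S.Nonempty}) (x : ZMod (2 * n)) :
    rayLoopOf p x = 0 ↔ ∃ k ∈ p.2.1, pointOfParity p.1 k = x := by
  rw [rayLoopOf, cyclicDistTo_eq_zero_iff, Finset.mem_image]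

lemma isRayLoop_rayLoopOf (p : ZMod 2 × {S : Finset (Fin n) // S.Nonempty}) :
    IsRayLoop (rayLoopOf p) :=
  isRayLoop_cyclicDistTo _ (dvd_mul_right 2 n) fun _ hz => by
    obtain ⟨k, -, rfl⟩ := Finset.mem_image.1 hz
    exact castHom_pointOfParity p.1 k

lemma rayLoopOf_injective : Function.Injective (rayLoopOf (n := n)) := by
  rintro ⟨b, S, hS⟩ ⟨c, T, hT⟩ h
  have hzero (x : ZMod (2 * n)) :
      (∃ k ∈ S, pointOfParity b k = x) ↔ ∃ k ∈ T, pointOfParity c k = x := by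
    rw [← rayLoopOf_eq_zero_iff (b, ⟨S, hS⟩), ← rayLoopOf_eq_zero_iff (c, ⟨T, hT⟩), h]
  obtain ⟨k, hk⟩ := hS
  obtain ⟨l, -, hl⟩ := (hzero _).1 ⟨k, hk, rfl⟩
  obtain rfl : c = b := by
    simpa only [castHom_pointOfParity] using congrArg (castHom (dvd_mul_right 2 n) (ZMod 2)) hl
  obtain rfl : S = T := by
    ext k
    simpa [(pointOfParity_injective c).eq_iff] using hzero (pointOfParity c k)
  rfl

variable [NeZero n]

lemma exists_pointOfParity {x : ZMod (2 * n)} {b : ZMod 2}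
    (hx : castHom (dvd_mul_right 2 n) (ZMod 2) x = b) : ∃ k, pointOfParity b k = x := by
  subst hx
  refine ⟨⟨x.val / 2, by have := x.val_lt; omega⟩, ?_⟩
  rw [pointOfParity, castHom_apply, cast_eq_val, val_natCast, Nat.div_add_mod, natCast_zmod_val]

lemma range_rayLoopOf : Set.range rayLoopOf = stmt7P n := by
  ext v
  rw [mem_stmt7P_iff]
  refine ⟨fun ⟨p, hp⟩ => hp ▸ isRayLoop_rayLoopOf p, fun hv => ?_⟩
  have hparity : ∀ z, v z = 0 → castHom (dvd_mul_right 2 n) (ZMod 2) z = v 0 := by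
    intro z hz
    have := hv.natCast_apply (dvd_mul_right 2 n) 0 z
    rw [hz, sub_zero] at this
    linear_combination (norm := ring_nf) this
    reduce_mod_char
  let S := Finset.univ.filter fun k => v (pointOfParity (v 0) k) = 0
  obtain ⟨z, hz, -⟩ := hv.exists_zero_near 0
  obtain ⟨k, rfl⟩ := exists_pointOfParity (hparity z hz)
  refine ⟨(v 0, ⟨S, k, by simpa [S] using hz⟩),
    IsRayLoop.eq_of_eq_zero_iff (isRayLoop_rayLoopOf _) hv fun x => ?_⟩
  rw [rayLoopOf_eq_zero_iff]
  constructor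
  · rintro ⟨k, hk, rfl⟩
    simpa [S] using hk
  · intro hx
    obtain ⟨k, rfl⟩ := exists_pointOfParity (hparity x hx)
    exact ⟨k, by simpa [S] using hx, rfl⟩

lemma ncard_stmt7P : (stmt7P n).ncard = 2 ^ (n + 1) - 2 := by
  rw [← range_rayLoopOf, ← Set.image_univ, Set.ncard_image_of_injective _ rayLoopOf_injective,
    Set.ncard_univ, Nat.card_eq_fintype_card, Fintype.card_prod, ZMod.card,
    card_subtype_finset_nonempty, Fintype.card_fin, pow_succ]
  have := Nat.one_le_two_pow (n := n)
  omega

end Count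

/-- each `P_n` (for `n ≥ 1`) is finite, `|P_1| = 2`, and
`|P_{n+1}| = 2|P_n| + 2` for all `n ≥ 1`. -/
theorem stmt7 :
    (∀ n : ℕ, 1 ≤ n → (stmt7P n).Finite) ∧
    (stmt7P 1).ncard = 2 ∧
    (∀ n : ℕ, 1 ≤ n → (stmt7P (n + 1)).ncard = 2 * (stmt7P n).ncard + 2) := by
  refine ⟨fun n hn => ?_, (ncard_stmt7P (n := 1)).trans rfl, fun n hn => ?_⟩
  · have : NeZero n := ⟨by omega⟩
    exact range_rayLoopOf (n := n) ▸ Set.finite_range _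
  · have : NeZero n := ⟨by omega⟩
    rw [ncard_stmt7P (n := n + 1), ncard_stmt7P (n := n), pow_succ, pow_succ]
    have := Nat.one_le_two_pow (n := n)
    omega
end

section
/- Let G be a finite simple graph with vertex set V. Let T be the square matrix over ℂ indexed by the darts (ordered pairs of adjacent vertices) of G, with T d e = 1 if the head of d equals the tail of e and e is not the reverse of d, and T d e = 0 otherwise. Let A be the adjacency matrix of G over ℂ and Q the diagonal matrix with Q v v = deg(v) − 1. Let |V| be the number of vertices and |E| the number of (undirected) edges of G. Then for every u ∈ ℂ: (1 − u²)^{|E|} · det(1 − u·A + u²·Q) = (1 − u²)^{|V|} · det(1 − u·T). -/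
/-!
Write `S`, `E` for the tail and head incidence matrices (vertices × darts) and `J` for the
reversal involution on darts. Then `T = Eᵀ S - J`, `S Eᵀ = A`, `S Sᵀ = D` (degrees) and
`J Eᵀ = Sᵀ`. Put `K = 1 + uJ` and `K' = 1 - uJ`, so that `K' K = (1 - u²) 1`. Left-multiplying the
block matrix `[[1, S], [uEᵀ, K]]`, whose determinant is `det (K - uEᵀS) = det (1 - uT)`, by
`[[(1 - u²) 1, -SK'], [0, 1]]` makes it block triangular with diagonal blocks
`(1 - u²) 1 - SK'uEᵀ = 1 - uA + u²(D - 1)` and `K`; no division by `1 - u²` is needed. Finally,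
listing darts as (chosen orientation of each edge, its reverse) turns `K` into
`[[1, u], [u, 1]]` with blocks indexed by edges, so `det K = (1 - u²)^|E|`.
-/

open Matrix Finset

namespace Matrix

variable {m n R : Type*} [Fintype m] [Fintype n] [DecidableEq m] [DecidableEq n] [CommRing R]

theorem pow_card_mul_det_sub_mul {c : R} {K K' : Matrix n n R} (hK : K' * K = c • 1)
    (A : Matrix m n R) (B : Matrix n m R) :
    c ^ Fintype.card m * det (K - B * A) = det (c • 1 - A * K' * B) * det K := by
  have hprod : fromBlocks (c • 1) (-(A * K')) 0 1 * fromBlocks 1 A B K =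
      fromBlocks (c • 1 - A * K' * B) 0 B K := by
    rw [fromBlocks_multiply]
    congr 1 <;> simp [Matrix.mul_assoc, hK, sub_eq_add_neg]
  have := congrArg det hprod
  rwa [det_mul, det_fromBlocks_zero₂₁, det_fromBlocks_one₁₁, det_fromBlocks_zero₁₂, det_one,
    mul_one, det_smul, det_one, mul_one] at this

end Matrix

namespace SimpleGraph

variable {V : Type*} (G : SimpleGraph V)

theorem exists_dart_edge_eq (e : G.edgeSet) : ∃ d : G.Dart, d.edge = e := by
  obtain ⟨e, he⟩ := e
  induction e using Sym2.ind with
  | h v w => exact ⟨⟨(v, w), he⟩, rfl⟩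

noncomputable def orientation (e : G.edgeSet) : G.Dart := (G.exists_dart_edge_eq e).choose

@[simp]
theorem edge_orientation (e : G.edgeSet) : (G.orientation e).edge = e :=
  (G.exists_dart_edge_eq e).choose_spec

theorem orientation_ne_symm (e e' : G.edgeSet) : G.orientation e ≠ (G.orientation e').symm := by
  intro h
  obtain rfl : e = e' := Subtype.ext <| by
    rw [← G.edge_orientation e, ← G.edge_orientation e', h, Dart.edge_symm]
  exact (G.orientation e).symm_ne h.symm

noncomputable def sumEquivDart : G.edgeSet ⊕ G.edgeSet ≃ G.Dart :=
  Equiv.ofBijective (Sum.elim G.orientation fun e => (G.orientation e).symm) <| by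
    have hinj (e e' : G.edgeSet) (h : (G.orientation e).edge = (G.orientation e').edge) :
        e = e' := Subtype.ext <| by simpa using h
    refine ⟨?_, fun d => ?_⟩
    · rintro (e | e) (e' | e') h
      · exact congrArg _ (hinj e e' (congrArg Dart.edge h))
      · exact (G.orientation_ne_symm e e' h).elim
      · exact (G.orientation_ne_symm e' e h.symm).elim
      · exact congrArg _ (hinj e e' (by simpa using congrArg Dart.edge h))
    · obtain h | h := (dart_edge_eq_iff _ d).1 (G.edge_orientation ⟨d.edge, d.edge_mem⟩)
      · exact ⟨.inl _, h⟩
      · exact ⟨.inr ⟨d.edge, d.edge_mem⟩, by simp [h]⟩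

theorem sumEquivDart_swap (x : G.edgeSet ⊕ G.edgeSet) :
    G.sumEquivDart x.swap = (G.sumEquivDart x).symm := by
  rcases x with e | e
  · rfl
  · exact (Dart.symm_symm _).symm

variable [DecidableEq V] (R : Type*) [CommRing R]

def tailMatrix : Matrix V G.Dart R := of fun v d => if d.fst = v then 1 else 0

def headMatrix : Matrix V G.Dart R := of fun v d => if d.snd = v then 1 else 0

def reverseMatrix : Matrix G.Dart G.Dart R := of fun d e => if e = d.symm then 1 else 0

def nonBacktrackingMatrix : Matrix G.Dart G.Dart R :=
  of fun d e => if d.snd = e.fst ∧ e ≠ d.symm then 1 else 0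

theorem reverseMatrix_submatrix_sumEquivDart :
    (G.reverseMatrix R).submatrix G.sumEquivDart G.sumEquivDart = fromBlocks 0 1 1 0 := by
  ext (x | x) (y | y) <;> simp [reverseMatrix, ← sumEquivDart_swap, one_apply, eq_comm]

variable {G R} [Fintype V]

theorem nonBacktrackingMatrix_eq :
    G.nonBacktrackingMatrix R = (G.headMatrix R)ᵀ * G.tailMatrix R - G.reverseMatrix R := by
  ext d e
  simp only [nonBacktrackingMatrix, reverseMatrix, headMatrix, tailMatrix, Matrix.sub_apply,
    mul_apply, transpose_apply, of_apply, boole_mul, Fintype.sum_ite_eq]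
  by_cases h : e = d.symm
  · simp [h, Dart.symm]
  · simp [h, eq_comm]

variable [DecidableRel G.Adj]

theorem tailMatrix_mul_headMatrix_transpose :
    G.tailMatrix R * (G.headMatrix R)ᵀ = G.adjMatrix R := by
  ext v w
  simp only [mul_apply, tailMatrix, headMatrix, transpose_apply, of_apply, boole_mul, ← ite_and,
    adjMatrix_apply]
  by_cases h : G.Adj v w
  · rw [Fintype.sum_eq_single ⟨(v, w), h⟩] <;> simp_all [Dart.ext_iff, Prod.ext_iff]
  · simp only [h, if_false]
    exact sum_eq_zero fun d _ => if_neg fun ⟨hv, hw⟩ => h (hv ▸ hw ▸ d.adj)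

theorem tailMatrix_mul_tailMatrix_transpose :
    G.tailMatrix R * (G.tailMatrix R)ᵀ = diagonal fun v => (G.degree v : R) := by
  ext v w
  simp only [mul_apply, tailMatrix, transpose_apply, of_apply, boole_mul, ← ite_and,
    diagonal_apply]
  split_ifs with h
  · simp [← h, sum_boole, G.dart_fst_fiber_card_eq_degree]
  · exact sum_eq_zero fun d _ => if_neg fun ⟨hv, hw⟩ => h (hv ▸ hw)

theorem reverseMatrix_mul_headMatrix_transpose :
    G.reverseMatrix R * (G.headMatrix R)ᵀ = (G.tailMatrix R)ᵀ := by
  ext d v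
  simp only [mul_apply, reverseMatrix, headMatrix, tailMatrix, transpose_apply, of_apply,
    boole_mul, Fintype.sum_ite_eq']
  rfl

theorem reverseMatrix_mul_self : G.reverseMatrix R * G.reverseMatrix R = 1 := by
  ext d e
  simp only [mul_apply, reverseMatrix, of_apply, boole_mul, Fintype.sum_ite_eq', Dart.symm_symm,
    one_apply, eq_comm]

theorem det_one_add_smul_reverseMatrix (u : R) :
    det (1 + u • G.reverseMatrix R) = (1 - u ^ 2) ^ #G.edgeFinset := calc
  _ = det ((1 : Matrix G.Dart G.Dart R).submatrix G.sumEquivDart G.sumEquivDart +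
        u • (G.reverseMatrix R).submatrix G.sumEquivDart G.sumEquivDart) :=
      (det_submatrix_equiv_self _ _).symm
  _ = det (fromBlocks 1 (u • 1) (u • 1) 1) := by
      congr 1
      rw [submatrix_one_equiv, reverseMatrix_submatrix_sumEquivDart, ← fromBlocks_one,
        fromBlocks_smul, fromBlocks_add]
      simp
  _ = det ((1 - u ^ 2) • (1 : Matrix G.edgeSet G.edgeSet R)) := by
      rw [det_fromBlocks_one₁₁, smul_mul_smul, Matrix.one_mul, sub_smul, one_smul, sq]
  _ = _ := by rw [det_smul, det_one, mul_one, card_edgeSet]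

theorem ihara_bass (u : R) :
    (1 - u ^ 2) ^ #G.edgeFinset *
      det (1 - u • G.adjMatrix R + u ^ 2 • diagonal fun v => (G.degree v : R) - 1) =
    (1 - u ^ 2) ^ Fintype.card V * det (1 - u • G.nonBacktrackingMatrix R) := by
  have hK : (1 - u • G.reverseMatrix R) * (1 + u • G.reverseMatrix R) = (1 - u ^ 2) • 1 := by
    simp only [Matrix.sub_mul, Matrix.mul_add, Matrix.one_mul, Matrix.mul_one, smul_mul_smul,
      reverseMatrix_mul_self]
    module
  have hT : 1 + u • G.reverseMatrix R - u • (G.headMatrix R)ᵀ * G.tailMatrix R =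
      1 - u • G.nonBacktrackingMatrix R := by
    rw [nonBacktrackingMatrix_eq, Matrix.smul_mul]
    module
  have hQ : (1 - u ^ 2) • 1 - G.tailMatrix R * (1 - u • G.reverseMatrix R) * u • (G.headMatrix R)ᵀ =
      1 - u • G.adjMatrix R + u ^ 2 • diagonal fun v => (G.degree v : R) - 1 := by
    have hdiag : (diagonal fun v => (G.degree v : R) - 1) =
        (diagonal fun v => (G.degree v : R)) - 1 := by
      rw [← diagonal_one, diagonal_sub]
    rw [hdiag]
    simp only [Matrix.mul_sub, Matrix.sub_mul, Matrix.mul_one, Matrix.mul_smul, Matrix.smul_mul,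
      Matrix.mul_assoc, reverseMatrix_mul_headMatrix_transpose, tailMatrix_mul_headMatrix_transpose,
      tailMatrix_mul_tailMatrix_transpose]
    module
  have h := Matrix.pow_card_mul_det_sub_mul hK (G.tailMatrix R) (u • (G.headMatrix R)ᵀ)
  rw [hT, hQ, det_one_add_smul_reverseMatrix] at h
  rw [h, mul_comm]

end SimpleGraph

/-- Bass's determinant identity (the Ihara determinant formula)
for a finite simple graph `G`: with `T` the non-backtracking dart matrix, `A`
the adjacency matrix and `Q` the diagonal matrix of `deg - 1`, one has
`(1-u²)^{|E|} det(1 - uA + u²Q) = (1-u²)^{|V|} det(1 - uT)` for all `u`. -/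
theorem stmt10 {V : Type*} [Fintype V] [DecidableEq V] (G : SimpleGraph V)
    [DecidableRel G.Adj] (u : ℂ) :
    (1 - u ^ 2) ^ G.edgeFinset.card *
      Matrix.det ((1 : Matrix V V ℂ) - u • G.adjMatrix ℂ
        + u ^ 2 • Matrix.diagonal (fun v => (G.degree v : ℂ) - 1)) =
    (1 - u ^ 2) ^ Fintype.card V *
      Matrix.det ((1 : Matrix G.Dart G.Dart ℂ) - u • Matrix.of (fun d e : G.Dart =>
        if d.snd = e.fst ∧ e ≠ d.symm then (1 : ℂ) else 0)) :=
  G.ihara_bass u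
end

section
/- Let P be a type, l : P → ℕ with l p ≥ 1 for all p, and w : P → ℂ. Assume there is K ≥ 1 such that for every n ≥ 1 the set {p | l p = n} is finite with at most K^n elements, and |w p| ≤ K^{l p} for all p. For n ≥ 1 define N n = ∑ l(p) · (w p)^d, the (finite) sum over all pairs (p, d) with d ≥ 1 and d · l(p) = n. Then there exists α > 0 such that for every complex u with |u| < α: the family (1 − w p · u^{l p})^{−1}, p ∈ P, is multipliable, the series ∑_{n≥1} N n · u^n / n converges absolutely, and ∏_p (1 − w p · u^{l p})^{−1} = exp(∑_{n≥1} N n · u^n / n). -/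
/-- `stmt11N l w n` is the weighted number of cycles of length `n`:
the sum of `l p * (w p)^d` over all pairs `(p, d)` with `d ≥ 1` and
`d * l p = n` (a finite sum, expressed as a `tsum` of a finitely supported
family). -/
noncomputable def stmt11N {P : Type*} (l : P → ℕ) (w : P → ℂ) (n : ℕ) : ℂ :=
  ∑' pd : P × ℕ,
    if 1 ≤ pd.2 ∧ pd.2 * l pd.1 = n then (l pd.1 : ℂ) * w pd.1 ^ pd.2 else 0

/-!
With `x p = w p * u ^ l p`, the hypotheses give `‖x p‖ ≤ (K ‖u‖) ^ l p`, and counting `p` by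
length shows `∑ p, ‖x p‖ < ∞` once `K ^ 2 ‖u‖ < 1`. Then the double series
`∑ (p, d), x p ^ d / d` converges absolutely. Summing it over `d` first gives
`∑ p, -log (1 - x p)`, whose exponential is the Euler product; summing it along the fibres of
`(p, d) ↦ d * l p` instead gives `∑ n, N n * u ^ n / n`, because
`x p ^ d / d = l p * w p ^ d * u ^ n / n` when `d * l p = n`. Since `1 / 0 = 0` in Lean,
the `d = 0` terms vanish, matching the constraint `1 ≤ d` in `stmt11N`, and so does the `n = 0`
term of the logarithmic series.
-/

open Complex

lemma summable_comp_of_summable_ncard_mul {P : Type*} (g : P → ℕ)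
    (hfin : ∀ n, {p | g p = n}.Finite) (a : ℕ → ℝ) (ha : ∀ n, 0 ≤ a n)
    (hsum : Summable fun n => ({p | g p = n}.ncard : ℝ) * a n) :
    Summable fun p => a (g p) := by
  rw [← (Equiv.sigmaFiberEquiv g).summable_iff]
  have (n : ℕ) : Finite {p // g p = n} := (hfin n).to_subtype
  refine (summable_sigma_of_nonneg fun _ => ha _).2 ⟨fun _ => Summable.of_finite, ?_⟩
  refine hsum.congr fun n => ?_
  have hconst : (fun c : {p // g p = n} => a (g (Equiv.sigmaFiberEquiv g ⟨n, c⟩)))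
      = fun _ => a n := funext fun c => by simp [c.2]
  rw [hconst, tsum_const, nsmul_eq_mul, ← Nat.card_coe_set_eq]
  rfl

lemma summable_pow_comp_of_ncard_le {P : Type*} (g : P → ℕ)
    (hfin : ∀ n, {p | g p = n}.Finite) {K t : ℝ}
    (hcard : ∀ n, ({p | g p = n}.ncard : ℝ) ≤ K ^ n) (ht : 0 ≤ t) (hKt : K * t < 1) :
    Summable fun p => t ^ g p := by
  refine summable_comp_of_summable_ncard_mul g hfin _ (fun n => by positivity) ?_
  have hK : 0 ≤ K := by simpa using (Nat.cast_nonneg _).trans (hcard 1)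
  refine (summable_geometric_of_lt_one (by positivity) hKt).of_nonneg_of_le
    (fun n => by positivity) fun n => ?_
  rw [mul_pow]
  gcongr
  exact hcard n

lemma summable_norm_pow_div {P : Type*} {x : P → ℂ} {q : ℝ} (hq0 : 0 ≤ q) (hq : q < 1)
    (hxq : ∀ p, ‖x p‖ ≤ q) (hx : Summable fun p => ‖x p‖) :
    Summable fun pd : P × ℕ => ‖x pd.1 ^ pd.2 / pd.2‖ := by
  have hgeom : Summable fun d : ℕ => q ^ (d - 1) :=
    (summable_nat_add_iff 1).1 (by simpa using summable_geometric_of_lt_one hq0 hq)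
  refine (hx.mul_of_nonneg hgeom (fun _ => norm_nonneg _) fun _ => by positivity).of_nonneg_of_le
    (fun _ => norm_nonneg _) ?_
  rintro ⟨p, _ | d⟩
  · simp
  calc ‖x p ^ (d + 1) / (d + 1 : ℕ)‖ ≤ ‖x p‖ ^ (d + 1) := by
        rw [norm_div, norm_pow, Complex.norm_natCast]
        exact div_le_self (by positivity) (by simp)
    _ = ‖x p‖ * ‖x p‖ ^ d := pow_succ' _ _
    _ ≤ ‖x p‖ * q ^ (d + 1 - 1) := by
        rw [Nat.add_sub_cancel]
        gcongr
        exact hxq p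

lemma norm_mul_pow_le {w u : ℂ} {K : ℝ} {n : ℕ} (hw : ‖w‖ ≤ K ^ n) :
    ‖w * u ^ n‖ ≤ (K * ‖u‖) ^ n := by
  rw [norm_mul, norm_pow, mul_pow]
  gcongr

lemma summable_norm_mul_pow {P : Type*} {l : P → ℕ} {w : P → ℂ} (hl : ∀ p, l p ≠ 0) {K : ℝ}
    (hfin : ∀ n : ℕ, 1 ≤ n → {p | l p = n}.Finite ∧ ({p | l p = n}.ncard : ℝ) ≤ K ^ n)
    (hw : ∀ p, ‖w p‖ ≤ K ^ l p) {u : ℂ} (hKu : K * (K * ‖u‖) < 1) :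
    Summable fun p => ‖w p * u ^ l p‖ := by
  have hfib (n : ℕ) : {p | l p = n}.Finite ∧ ({p | l p = n}.ncard : ℝ) ≤ K ^ n := by
    rcases n with _ | n
    · have : {p | l p = 0} = ∅ := Set.eq_empty_of_forall_notMem hl
      simp [this]
    · exact hfin _ n.succ_pos
  have hK : 0 ≤ K := by simpa using (Nat.cast_nonneg _).trans (hfib 1).2
  exact (summable_pow_comp_of_ncard_le l (fun n => (hfib n).1) (fun n => (hfib n).2)
    (by positivity) hKu).of_nonneg_of_le (fun _ => norm_nonneg _) fun p => norm_mul_pow_le (hw p)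

lemma hasProd_inv_one_sub {P : Type*} {x : P → ℂ} (hx : ∀ p, ‖x p‖ < 1)
    (hF : Summable fun pd : P × ℕ => x pd.1 ^ pd.2 / pd.2) :
    HasProd (fun p => (1 - x p)⁻¹) (exp (∑' pd : P × ℕ, x pd.1 ^ pd.2 / pd.2)) := by
  have hrow (p : P) := hasSum_taylorSeries_neg_log (hx p)
  have hlog := hF.hasSum.prod_fiberwise hrow
  have hexp : exp ∘ (fun p => -log (1 - x p)) = fun p => (1 - x p)⁻¹ := by
    ext p
    have hne : 1 - x p ≠ 0 := fun h => by simpa [← sub_eq_zero.1 h] using hx p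
    simp [exp_neg, exp_log hne]
  simpa only [hexp] using hlog.cexp

lemma summable_norm_tsum_fiberwise {β γ E : Type*} [SeminormedAddCommGroup E]
    {f : β → E} (hf : Summable fun b => ‖f b‖) (g : β → γ) :
    Summable fun c => ‖∑' b : g ⁻¹' {c}, f b‖ :=
  (hf.hasSum.tsum_fiberwise g).summable.of_nonneg_of_le (fun _ => norm_nonneg _)
    fun _ => norm_tsum_le_tsum_norm (hf.subtype _)

lemma tsum_fiber_pow_div_eq_stmt11N {P : Type*} {l : P → ℕ} (w : P → ℂ) (hl : ∀ p, l p ≠ 0)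
    (u : ℂ) (n : ℕ) :
    ∑' pd : (fun pd : P × ℕ => pd.2 * l pd.1) ⁻¹' {n},
        (w pd.1.1 * u ^ l pd.1.1) ^ pd.1.2 / pd.1.2 = stmt11N l w n * u ^ n / n := by
  rw [tsum_subtype (_ ⁻¹' {n}) fun pd : P × ℕ => (w pd.1 * u ^ l pd.1) ^ pd.2 / pd.2, stmt11N,
    ← tsum_mul_right, ← tsum_div_const]
  refine tsum_congr fun ⟨p, d⟩ => ?_
  by_cases hn : d * l p = n
  · subst hn
    rcases d with _ | d
    · simp
    rw [Set.indicator_of_mem (by exact rfl), if_pos ⟨d.succ_pos, rfl⟩]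
    have hlp : (l p : ℂ) ≠ 0 := Nat.cast_ne_zero.2 (hl p)
    simp only [mul_pow, ← pow_mul, Nat.cast_mul]
    field_simp
    ring
  · rw [Set.indicator_of_notMem (by exact hn), if_neg fun h => hn h.2]
    simp

lemma hasSum_stmt11N_mul_pow_div {P : Type*} {l : P → ℕ} {w : P → ℂ} (hl : ∀ p, l p ≠ 0)
    {u : ℂ} (hF : Summable fun pd : P × ℕ => ‖(w pd.1 * u ^ l pd.1) ^ pd.2 / pd.2‖) :
    HasSum (fun n => stmt11N l w n * u ^ n / n)
        (∑' pd : P × ℕ, (w pd.1 * u ^ l pd.1) ^ pd.2 / pd.2) ∧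
      Summable fun n => ‖stmt11N l w n * u ^ n / n‖ := by
  simp only [← tsum_fiber_pow_div_eq_stmt11N w hl u]
  exact ⟨hF.of_norm.hasSum.tsum_fiberwise _, summable_norm_tsum_fiberwise hF _⟩

/-- the Euler product manipulation for the Bass–Ihara zeta
function.  If there are at most `K^n` elements `p` with `l p = n` and
`|w p| ≤ K^{l p}`, then for `|u|` small enough the Euler product over `P` is
multipliable, the logarithmic series converges absolutely, and
`∏_p (1 - w p u^{l p})⁻¹ = exp (∑_{n ≥ 1} N_n u^n / n)`. -/
theorem stmt11 {P : Type*} (l : P → ℕ) (w : P → ℂ) (hl : ∀ p, 1 ≤ l p)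
    (K : ℝ) (hK : 1 ≤ K)
    (hfin : ∀ n : ℕ, 1 ≤ n →
      {p | l p = n}.Finite ∧ ({p | l p = n}.ncard : ℝ) ≤ K ^ n)
    (hw : ∀ p, ‖w p‖ ≤ K ^ l p) :
    ∃ α : ℝ, 0 < α ∧ ∀ u : ℂ, ‖u‖ < α →
      Multipliable (fun p => (1 - w p * u ^ l p)⁻¹) ∧
      Summable (fun n : ℕ =>
        ‖stmt11N l w (n + 1) * u ^ (n + 1) / (n + 1)‖) ∧
      ∏' p, (1 - w p * u ^ l p)⁻¹
        = Complex.exp (∑' n : ℕ, stmt11N l w (n + 1) * u ^ (n + 1) / (n + 1)) := by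
  have hK0 : 0 < K := by linarith
  refine ⟨(K ^ 2)⁻¹, by positivity, fun u hu => ?_⟩
  have hKu : K * (K * ‖u‖) < 1 :=
    calc K * (K * ‖u‖) = K ^ 2 * ‖u‖ := by ring
      _ < K ^ 2 * (K ^ 2)⁻¹ := by gcongr
      _ = 1 := mul_inv_cancel₀ (by positivity)
  have hKu' : K * ‖u‖ < 1 := (le_mul_of_one_le_left (by positivity) hK).trans_lt hKu
  have hl0 (p : P) : l p ≠ 0 := Nat.one_le_iff_ne_zero.1 (hl p)
  set x : P → ℂ := fun p => w p * u ^ l p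
  have hx_le (p : P) : ‖x p‖ ≤ K * ‖u‖ :=
    (norm_mul_pow_le (hw p)).trans (pow_le_of_le_one (by positivity) hKu'.le (hl0 p))
  have hF := summable_norm_pow_div (by positivity) hKu' hx_le
    (summable_norm_mul_pow hl0 hfin hw hKu)
  have hprod := hasProd_inv_one_sub (fun p => (hx_le p).trans_lt hKu') hF.of_norm
  obtain ⟨hT, hT_norm⟩ := hasSum_stmt11N_mul_pow_div hl0 hF
  have hT_shift := (hasSum_nat_add_iff' 1).2 hT
  simp only [Nat.cast_succ, Finset.range_one, Finset.sum_singleton, Nat.cast_zero, div_zero,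
    sub_zero] at hT_shift
  refine ⟨hprod.multipliable, ?_, by rw [hprod.tprod_eq, hT_shift.tsum_eq]⟩
  simpa only [Nat.cast_succ] using (summable_nat_add_iff 1).2 hT_norm
end

section
/- Let q ≥ 2 be an integer and define T : ℕ → ℕ → ℝ by: T (2n+1) (2n) = q − 1 and T (2n+2) (2n) = 1 for all n ≥ 0; T 0 1 = q; T (2n−1) (2n+1) = q for all n ≥ 1; and all other entries 0. Since every row and every column of T has only finitely many nonzero entries, all matrix powers T^m have well-defined entries given by finite sums. Then for every m ≥ 1 the set {i ∈ ℕ | (T^m) i i ≠ 0} is finite and ∑_i (T^m) i i = 2q^m − 2q^{m/2} if m is even, and = 0 if m is odd. -/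
/-- The edge operator `T` of the quotient of the `(q+1)`-regular Bruhat–Tits
tree of `GL₂(F_q((1/t)))` by `Γ = GL₂(F_q[t])` (a Nagao ray): even indices
`2n` encode the outward ray edges `e_n`, odd indices `2n+1` their reversals
`f_n`, with the Bass weights. -/
noncomputable def stmt13T (q : ℕ) : ℕ → ℕ → ℝ := fun i j =>
  if i = j + 1 ∧ j % 2 = 0 then (q : ℝ) - 1
  else if i = j + 2 ∧ j % 2 = 0 then 1
  else if i = 0 ∧ j = 1 then (q : ℝ)
  else if j = i + 2 ∧ i % 2 = 1 then (q : ℝ)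
  else 0

/-- The powers of `stmt13T`: since every row and column of `T` has only
finitely many nonzero entries, each entry of `T^m` is a (finite) sum, here
expressed as a `tsum` of a finitely supported family. -/
noncomputable def stmt13Tpow (q : ℕ) : ℕ → ℕ → ℕ → ℝ
  | 0 => fun i j => if i = j then 1 else 0
  | m + 1 => fun i j => ∑' k, stmt13T q i k * stmt13Tpow q m k j

/-!
Read `T` as a weighted walk on the ray: from `e₀` one steps to `f₀` (weight `q`), from `e_{a+1}`
down to `e_a` (weight `1`), and from `f_a` either up to `f_{a+1}` (weight `q`) or across to `e_a`
(weight `q - 1`). A closed walk through `e_a` or `f_a` must pass through `e₀`, so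
`(T^m)(e_a, e_a) = (T^{m-a})(e₀, e_a)` and `(T^m)(f_a, f_a) = q^{a+1} (T^{m-a-1})(f_a, e₀)`;
the second one peels steps off the right end, using `T^{n+1} = T^n T`, which holds because the
rows and columns of `T` are finitely supported.
Row `e₀` and column `e₀` of `T^n` have simple closed forms, checked against the one-step
recursions; both give `q^{m-a} - q^{m-a-1}` on the diagonal when `m` is even and `2a + 2 ≤ m`,
and zero otherwise, and the trace telescopes to `2q^m - 2q^{m/2}`.
-/

open Finset

theorem tsum_mul_tsum_assoc {α β R : Type*} [NonUnitalSemiring R] [TopologicalSpace R]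
    {f : α → R} {g : α → β → R} {h : β → R} {s : Finset α} {t : Finset β}
    (hf : ∀ a ∉ s, f a = 0) (hh : ∀ b ∉ t, h b = 0) :
    ∑' b, (∑' a, f a * g a b) * h b = ∑' a, f a * ∑' b, g a b * h b := by
  have hf' (b : β) : ∑' a, f a * g a b = ∑ a ∈ s, f a * g a b :=
    tsum_eq_sum fun a ha => by rw [hf a ha, zero_mul]
  have hh' (a : α) : ∑' b, g a b * h b = ∑ b ∈ t, g a b * h b :=
    tsum_eq_sum fun b hb => by rw [hh b hb, mul_zero]
  rw [tsum_eq_sum (s := t) fun b hb => by rw [hh b hb, mul_zero],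
    tsum_eq_sum (s := s) fun a ha => by rw [hf a ha, zero_mul]]
  simp only [hf', hh', sum_mul, mul_sum, mul_assoc]
  exact sum_comm

noncomputable def powDiff (q n : ℕ) : ℝ := (q : ℝ) ^ n - (q : ℝ) ^ (n - 1)

lemma powDiff_succ (q n : ℕ) : powDiff q (n + 1) = ((q : ℝ) - 1) * (q : ℝ) ^ n := by
  rw [powDiff, Nat.add_sub_cancel, pow_succ]
  ring

lemma powDiff_one (q : ℕ) : powDiff q 1 = q - 1 := by
  simp [powDiff]

lemma powDiff_succ_of_pos (q : ℕ) {n : ℕ} (hn : 1 ≤ n) :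
    powDiff q (n + 1) = q * powDiff q n := by
  obtain ⟨n, rfl⟩ := Nat.exists_eq_add_of_le' hn
  rw [powDiff_succ, powDiff_succ, pow_succ]
  ring

lemma pow_mul_powDiff (q k : ℕ) {n : ℕ} (hn : 1 ≤ n) :
    (q : ℝ) ^ k * powDiff q n = powDiff q (n + k) := by
  obtain ⟨n, rfl⟩ := Nat.exists_eq_add_of_le' hn
  rw [powDiff_succ, add_right_comm, powDiff_succ, pow_add]
  ring

lemma sum_range_powDiff (q c k : ℕ) :
    ∑ a ∈ range c, powDiff q (k + c - a) = (q : ℝ) ^ (k + c) - (q : ℝ) ^ k := by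
  rw [← sum_range_reflect]
  calc ∑ j ∈ range c, powDiff q (k + c - (c - 1 - j))
      = ∑ j ∈ range c, ((q : ℝ) ^ (k + (j + 1)) - (q : ℝ) ^ (k + j)) :=
        sum_congr rfl fun j hj => by
          rw [mem_range] at hj
          rw [show k + c - (c - 1 - j) = k + (j + 1) by omega, powDiff,
            show k + (j + 1) - 1 = k + j by omega]
    _ = (q : ℝ) ^ (k + c) - (q : ℝ) ^ k := by
        rw [sum_range_sub fun j => (q : ℝ) ^ (k + j), add_zero]

lemma tsum_ite_powDiff (q m : ℕ) :
    ∑' a, (if m % 2 = 0 ∧ 2 * a + 2 ≤ m then powDiff q (m - a) else 0) =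
      if m % 2 = 0 then (q : ℝ) ^ m - (q : ℝ) ^ (m / 2) else 0 := by
  rw [tsum_eq_sum (s := range (m / 2)) fun a ha => if_neg (by rw [mem_range] at ha; omega)]
  split_ifs with hm
  · obtain ⟨c, rfl⟩ : ∃ c, m = c + c := ⟨m / 2, by omega⟩
    rw [show (c + c) / 2 = c by omega, ← sum_range_powDiff q c c]
    exact sum_congr rfl fun a ha => if_pos (by rw [mem_range] at ha; omega)
  · exact sum_eq_zero fun a _ => if_neg (by omega)

section Entries

variable (q : ℕ)

lemma stmt13T_row_zero (k : ℕ) : stmt13T q 0 k = if k = 1 then (q : ℝ) else 0 := by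
  unfold stmt13T; grind

lemma stmt13T_row_even (a k : ℕ) : stmt13T q (2 * a + 2) k = if k = 2 * a then 1 else 0 := by
  unfold stmt13T; grind

lemma stmt13T_row_odd (a k : ℕ) : stmt13T q (2 * a + 1) k =
    if k = 2 * a then (q : ℝ) - 1 else if k = 2 * a + 3 then (q : ℝ) else 0 := by
  unfold stmt13T; grind

lemma stmt13T_col_one (k : ℕ) : stmt13T q k 1 = if k = 0 then (q : ℝ) else 0 := by
  unfold stmt13T; grind

lemma stmt13T_col_odd (b k : ℕ) :
    stmt13T q k (2 * b + 3) = if k = 2 * b + 1 then (q : ℝ) else 0 := by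
  unfold stmt13T; grind

lemma stmt13T_col_even (b k : ℕ) : stmt13T q k (2 * b) =
    if k = 2 * b + 1 then (q : ℝ) - 1 else if k = 2 * b + 2 then 1 else 0 := by
  unfold stmt13T; grind

lemma stmt13T_eq_zero_of_add_three_le {i k : ℕ} (h : i + 3 ≤ k) : stmt13T q i k = 0 := by
  unfold stmt13T; grind

lemma stmt13T_eq_zero_of_add_three_le' {i k : ℕ} (h : k + 3 ≤ i) : stmt13T q i k = 0 := by
  unfold stmt13T; grind

end Entries

section Recursions

variable (q : ℕ)

lemma stmt13Tpow_zero (i j : ℕ) : stmt13Tpow q 0 i j = if i = j then 1 else 0 := rfl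

lemma stmt13Tpow_succ' (n i j : ℕ) :
    stmt13Tpow q (n + 1) i j = ∑' k, stmt13T q i k * stmt13Tpow q n k j := rfl

lemma stmt13Tpow_succ (n i j : ℕ) :
    stmt13Tpow q (n + 1) i j = ∑' k, stmt13Tpow q n i k * stmt13T q k j := by
  induction n generalizing i j with
  | zero =>
    rw [stmt13Tpow_succ', tsum_eq_single j fun k hk => by rw [stmt13Tpow_zero, if_neg hk, mul_zero],
      tsum_eq_single i fun k hk => by rw [stmt13Tpow_zero, if_neg (Ne.symm hk), zero_mul],
      stmt13Tpow_zero, stmt13Tpow_zero, if_pos rfl, if_pos rfl, mul_one, one_mul]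
  | succ n ih =>
    calc stmt13Tpow q (n + 2) i j
        = ∑' k, stmt13T q i k * ∑' l, stmt13Tpow q n k l * stmt13T q l j := by
          rw [stmt13Tpow_succ']
          simp only [ih]
      _ = ∑' l, (∑' k, stmt13T q i k * stmt13Tpow q n k l) * stmt13T q l j :=
          (tsum_mul_tsum_assoc (s := range (i + 3)) (t := range (j + 3))
            (fun k hk => stmt13T_eq_zero_of_add_three_le q (by simpa using hk))
            (fun l hl => stmt13T_eq_zero_of_add_three_le' q (by simpa using hl))).symm

lemma stmt13Tpow_succ_row_zero (n j : ℕ) :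
    stmt13Tpow q (n + 1) 0 j = q * stmt13Tpow q n 1 j := by
  rw [stmt13Tpow_succ', tsum_eq_single 1 fun k hk => by rw [stmt13T_row_zero, if_neg hk, zero_mul],
    stmt13T_row_zero, if_pos rfl]

lemma stmt13Tpow_succ_row_even (n a j : ℕ) :
    stmt13Tpow q (n + 1) (2 * a + 2) j = stmt13Tpow q n (2 * a) j := by
  rw [stmt13Tpow_succ', tsum_eq_single (2 * a) fun k hk => by
      rw [stmt13T_row_even, if_neg hk, zero_mul],
    stmt13T_row_even, if_pos rfl, one_mul]

lemma stmt13Tpow_succ_row_odd (n a j : ℕ) :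
    stmt13Tpow q (n + 1) (2 * a + 1) j =
      (q - 1) * stmt13Tpow q n (2 * a) j + q * stmt13Tpow q n (2 * a + 3) j := by
  rw [stmt13Tpow_succ', tsum_eq_sum (s := {2 * a, 2 * a + 3}) fun k hk => ?_,
    sum_pair (by omega), stmt13T_row_odd, stmt13T_row_odd, if_pos rfl, if_neg (by omega),
    if_pos rfl]
  rw [mem_insert, mem_singleton, not_or] at hk
  rw [stmt13T_row_odd, if_neg hk.1, if_neg hk.2, zero_mul]

lemma stmt13Tpow_succ_col_one (n i : ℕ) :
    stmt13Tpow q (n + 1) i 1 = q * stmt13Tpow q n i 0 := by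
  rw [stmt13Tpow_succ, tsum_eq_single 0 fun k hk => by rw [stmt13T_col_one, if_neg hk, mul_zero],
    stmt13T_col_one, if_pos rfl, mul_comm]

lemma stmt13Tpow_succ_col_odd (n b i : ℕ) :
    stmt13Tpow q (n + 1) i (2 * b + 3) = q * stmt13Tpow q n i (2 * b + 1) := by
  rw [stmt13Tpow_succ, tsum_eq_single (2 * b + 1) fun k hk => by
      rw [stmt13T_col_odd, if_neg hk, mul_zero],
    stmt13T_col_odd, if_pos rfl, mul_comm]

lemma stmt13Tpow_succ_col_even (n b i : ℕ) :
    stmt13Tpow q (n + 1) i (2 * b) =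
      (q - 1) * stmt13Tpow q n i (2 * b + 1) + stmt13Tpow q n i (2 * b + 2) := by
  rw [stmt13Tpow_succ, tsum_eq_sum (s := {2 * b + 1, 2 * b + 2}) fun k hk => ?_,
    sum_pair (by omega), stmt13T_col_even, stmt13T_col_even, if_pos rfl, if_neg (by omega),
    if_pos rfl, mul_comm, mul_one]
  rw [mem_insert, mem_singleton, not_or] at hk
  rw [stmt13T_col_even, if_neg hk.1, if_neg hk.2, mul_zero]

lemma stmt13Tpow_add_row_even (n k a j : ℕ) :
    stmt13Tpow q (n + k) (2 * (a + k)) j = stmt13Tpow q n (2 * a) j := by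
  induction k with
  | zero => rfl
  | succ k ih =>
    rw [show 2 * (a + (k + 1)) = 2 * (a + k) + 2 by ring, ← add_assoc,
      stmt13Tpow_succ_row_even, ih]

lemma stmt13Tpow_add_col_odd (n k b i : ℕ) :
    stmt13Tpow q (n + k) i (2 * (b + k) + 1) = q ^ k * stmt13Tpow q n i (2 * b + 1) := by
  induction k with
  | zero => simp
  | succ k ih =>
    rw [← add_assoc, show 2 * (b + (k + 1)) + 1 = 2 * (b + k) + 3 by ring,
      stmt13Tpow_succ_col_odd, ih, pow_succ]
    ring

end Recursions

section ClosedForms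

variable (q : ℕ)

/- Apart from the empty walk and the walk climbing straight from `e₀` to `f_b` (weight `q ^ n`),
the walks from `e₀` with given length and end turn at least once, and their weights add up to
`q^n - q^{n-1}`. -/
theorem stmt13Tpow_row_zero (n : ℕ) :
    (∀ b, stmt13Tpow q n 0 (2 * b) =
      if n = 0 ∧ b = 0 then 1
      else if b + 2 ≤ n ∧ (n + b) % 2 = 0 then powDiff q n else 0) ∧
    (∀ b, stmt13Tpow q n 0 (2 * b + 1) =
      if n = b + 1 then (q : ℝ) ^ n
      else if b + 3 ≤ n ∧ (n + b) % 2 = 1 then powDiff q n else 0) := by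
  induction n with
  | zero => refine ⟨fun b => ?_, fun b => ?_⟩ <;> rw [stmt13Tpow_zero] <;> grind
  | succ n ih =>
    obtain ⟨heven, hodd⟩ := ih
    refine ⟨fun b => ?_, fun b => ?_⟩
    · rw [stmt13Tpow_succ_col_even, hodd, show 2 * b + 2 = 2 * (b + 1) by ring, heven]
      grind [powDiff_succ, powDiff_succ_of_pos]
    · rcases b with _ | b
      · rw [stmt13Tpow_succ_col_one, heven 0]
        rcases n with _ | n
        · simp
        · grind [powDiff_succ_of_pos]
      · rw [show 2 * (b + 1) + 1 = 2 * b + 3 by ring, stmt13Tpow_succ_col_odd, hodd]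
        grind [powDiff_succ_of_pos]

theorem stmt13Tpow_col_zero (n : ℕ) :
    (∀ a, stmt13Tpow q n (2 * a) 0 =
      if n = a then 1
      else if a + 2 ≤ n ∧ (n + a) % 2 = 0 then powDiff q (n - a) else 0) ∧
    (∀ a, stmt13Tpow q n (2 * a + 1) 0 =
      if a + 1 ≤ n ∧ (n + a) % 2 = 1 then powDiff q (n - a) else 0) := by
  induction n with
  | zero => refine ⟨fun a => ?_, fun a => ?_⟩ <;> rw [stmt13Tpow_zero] <;> grind
  | succ n ih =>
    obtain ⟨heven, hodd⟩ := ih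
    refine ⟨fun a => ?_, fun a => ?_⟩
    · rcases a with _ | a
      · rw [stmt13Tpow_succ_row_zero, hodd 0]
        grind [powDiff_succ_of_pos]
      · rw [show 2 * (a + 1) = 2 * a + 2 by ring, stmt13Tpow_succ_row_even, heven]
        grind
    · rw [stmt13Tpow_succ_row_odd, heven, show 2 * a + 3 = 2 * (a + 1) + 1 by ring, hodd]
      obtain h | rfl | ⟨d, rfl⟩ : n < a ∨ n = a ∨ ∃ d, n = a + 1 + d :=
        (lt_trichotomy n a).imp_right (Or.imp_right fun h => ⟨n - a - 1, by omega⟩)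
      · grind
      · rw [Nat.add_sub_cancel_left, powDiff_one]
        grind
      · rw [show a + 1 + d + 1 - a = d + 2 by omega, show a + 1 + d - a = d + 1 by omega,
          show a + 1 + d - (a + 1) = d by omega]
        grind [powDiff_succ_of_pos]

end ClosedForms

section Diagonal

variable (q : ℕ) {m : ℕ}

lemma stmt13Tpow_diag_even (hm : 1 ≤ m) (a : ℕ) : stmt13Tpow q m (2 * a) (2 * a) =
    if m % 2 = 0 ∧ 2 * a + 2 ≤ m then powDiff q (m - a) else 0 := by
  rcases le_or_gt a m with h | h
  · obtain ⟨n, rfl⟩ := Nat.exists_eq_add_of_le' h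
    have hdown : stmt13Tpow q (n + a) (2 * a) (2 * a) = stmt13Tpow q n 0 (2 * a) := by
      simpa using stmt13Tpow_add_row_even q n a 0 (2 * a)
    rw [hdown, (stmt13Tpow_row_zero q n).1, Nat.add_sub_cancel]
    grind
  · obtain ⟨k, rfl⟩ : ∃ k, a = k + 1 + m := ⟨a - m - 1, by omega⟩
    have hdown : stmt13Tpow q m (2 * (k + 1 + m)) (2 * (k + 1 + m)) =
        stmt13Tpow q 0 (2 * (k + 1)) (2 * (k + 1 + m)) := by
      simpa using stmt13Tpow_add_row_even q 0 m (k + 1) (2 * (k + 1 + m))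
    rw [hdown, stmt13Tpow_zero]
    grind

lemma stmt13Tpow_diag_odd (hm : 1 ≤ m) (a : ℕ) : stmt13Tpow q m (2 * a + 1) (2 * a + 1) =
    if m % 2 = 0 ∧ 2 * a + 2 ≤ m then powDiff q (m - a) else 0 := by
  rcases lt_or_ge a m with h | h
  · obtain ⟨n, rfl⟩ : ∃ n, m = n + 1 + a := ⟨m - a - 1, by omega⟩
    have hup : stmt13Tpow q (n + 1 + a) (2 * a + 1) (2 * a + 1) =
        (q : ℝ) ^ (a + 1) * stmt13Tpow q n (2 * a + 1) 0 := by
      rw [show 2 * a + 1 = 2 * (0 + a) + 1 by ring, stmt13Tpow_add_col_odd, zero_add,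
        stmt13Tpow_succ_col_one, pow_succ, mul_assoc]
    rw [hup, (stmt13Tpow_col_zero q n).2, mul_ite, mul_zero]
    refine ite_congr (by grind) (fun hc => ?_) fun _ => rfl
    rw [pow_mul_powDiff q _ (by omega)]
    congr 1
    omega
  · obtain ⟨k, rfl⟩ := Nat.exists_eq_add_of_le h
    have hup : stmt13Tpow q m (2 * (m + k) + 1) (2 * (m + k) + 1) =
        (q : ℝ) ^ m * stmt13Tpow q 0 (2 * (m + k) + 1) (2 * k + 1) := by
      simpa [add_comm k m] using stmt13Tpow_add_col_odd q 0 m k (2 * (m + k) + 1)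
    rw [hup, stmt13Tpow_zero]
    grind

end Diagonal

theorem stmt13_general (q : ℕ) (m : ℕ) (hm : 1 ≤ m) :
    {i : ℕ | stmt13Tpow q m i i ≠ 0}.Finite ∧
    ∑' i : ℕ, stmt13Tpow q m i i
      = if m % 2 = 0 then 2 * (q : ℝ) ^ m - 2 * (q : ℝ) ^ (m / 2) else 0 := by
  have hsupp (i : ℕ) (hi : i ∉ range m) : stmt13Tpow q m i i = 0 := by
    rw [mem_range] at hi
    obtain ⟨a, rfl | rfl⟩ := Nat.even_or_odd' i
    · rw [stmt13Tpow_diag_even q hm, if_neg (by omega)]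
    · rw [stmt13Tpow_diag_odd q hm, if_neg (by omega)]
  have hsum : Summable fun i => stmt13Tpow q m i i := summable_of_ne_finset_zero hsupp
  refine ⟨(range m).finite_toSet.subset fun i hi => by_contra fun h => hi (hsupp i h), ?_⟩
  rw [← tsum_even_add_odd (f := fun i => stmt13Tpow q m i i)
    (hsum.comp_injective (i := fun a => 2 * a) fun a b h => by simpa using h)
    (hsum.comp_injective (i := fun a => 2 * a + 1) fun a b h => by simpa using h)]
  simp only [stmt13Tpow_diag_even q hm, stmt13Tpow_diag_odd q hm, tsum_ite_powDiff]
  split_ifs <;> ring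

/-- for every `m ≥ 1` the diagonal of `T^m` has finite support
and its sum (the trace) equals `2q^m - 2q^{m/2}` for even `m` and `0` for odd
`m`. -/
theorem stmt13 (q : ℕ) (hq : 2 ≤ q) (m : ℕ) (hm : 1 ≤ m) :
    {i : ℕ | stmt13Tpow q m i i ≠ 0}.Finite ∧
    ∑' i : ℕ, stmt13Tpow q m i i
      = if m % 2 = 0 then 2 * (q : ℝ) ^ m - 2 * (q : ℝ) ^ (m / 2) else 0 :=
  stmt13_general q m hm
end
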